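/- arXiv:2012.14004 — 4 statements merged into one kernel-verified Lean document; each statement's English description precedes it below -/
import Mathlib

section
/- Let P_m be a dyadic digital (t_m, m, s)-net in base 2 with dual net P_m^⊥. Then for every A = (a_1,…,a_s) ∈ I_m^s and every Y ∈ [0,1)^s, the micro-local discrepancy has the Walsh-series representation λ_A(P_m ⊕ Y^{(m)}) = 2^{m − a_0(A)} ∑_{𝔪 ∈ P_m^{⊥,*}, ρ(𝔪_i) ≤ a_i ∀i} e(∑_{i=1}^s (∑_{j=1}^m 𝔪_{i,j} y_{i,j} + 𝔪_{i,a_i})), with the convention 𝔪_{i,0} := 0. -/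
open MeasureTheory Filter

noncomputable section

attribute [local instance] Classical.propDecidable

/-- The `a`-th binary digit (`a ≥ 1`) of the dyadic expansion of `x ∈ [0,1)`
(the finite expansion is used for dyadic rationals). -/
def bdigit (a : ℕ) (x : ℝ) : ℕ := (⌊x * 2 ^ a⌋).toNat % 2

/-- Digitwise addition modulo 2 of dyadic expansions: `x ⊕ y`. -/
def xorReal (x y : ℝ) : ℝ :=
  ∑' a : ℕ, (((bdigit (a + 1) x + bdigit (a + 1) y) % 2 : ℕ) : ℝ) / 2 ^ (a + 1)

/-- Coordinatewise digitwise addition `⊕` on vectors. -/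
def xorVec {s : ℕ} (X Y : Fin s → ℝ) : Fin s → ℝ := fun i => xorReal (X i) (Y i)

/-- Local discrepancy `D(P, Y)` of a finite point set `P` in `[0,1)^s`. -/
def Dloc {N s : ℕ} (P : Fin N → Fin s → ℝ) (Y : Fin s → ℝ) : ℝ :=
  (∑ n : Fin N, if ∀ i, 0 ≤ P n i ∧ P n i < Y i then (1 : ℝ) else 0) -
    (N : ℝ) * ∏ i, Y i

/-- `P` is a `(t,m,s)`-net in base 2: every elementary dyadic box of volume
`2^(t-m)` contains exactly `2^t` of the points. -/
def IsNet (t m s : ℕ) (P : Fin (2 ^ m) → Fin s → ℝ) : Prop :=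
  ∀ d a : Fin s → ℕ, (∀ i, a i < 2 ^ d i) → (∑ i, d i) + t = m →
    (Finset.univ.filter fun n => ∀ i,
        (a i : ℝ) / 2 ^ d i ≤ P n i ∧ P n i < ((a i : ℝ) + 1) / 2 ^ d i).card = 2 ^ t

/-- The digits `x_{n,i,j}` of the `n`-th point of the dyadic digital net with
generating matrices `C`. -/
def netDig (m s : ℕ) (C : Fin s → Matrix (Fin m) (Fin m) (ZMod 2)) (n : ℕ) :
    Fin s → Fin m → ZMod 2 :=
  fun i j => ∑ r : Fin m, C i j r * (if n.testBit r then 1 else 0)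

/-- The `n`-th point of the dyadic digital net with generating matrices `C`. -/
def netPoint (m s : ℕ) (C : Fin s → Matrix (Fin m) (Fin m) (ZMod 2)) (n : ℕ) :
    Fin s → ℝ :=
  fun i => ∑ j : Fin m, ((netDig m s C n i j).val : ℝ) / 2 ^ ((j : ℕ) + 1)

/-- The unit cube `[0,1]^s`. -/
def cube (s : ℕ) : Set (Fin s → ℝ) := Set.univ.pi fun _ => Set.Icc (0 : ℝ) 1

/-- The point of `Q^s(2^m)` with coordinates `T i / 2^m`. -/
def Qpt {s : ℕ} (m : ℕ) (T : Fin s → Fin (2 ^ m)) : Fin s → ℝ :=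
  fun i => ((T i : ℕ) : ℝ) / 2 ^ m

/-- `M_{s,p}(P) = (2^{-sm} ∑_{T ∈ Q^s(2^m)} ∫_{[0,1]^s} |D(P ⊕ T, Y)|^p dY)^{1/p}`. -/
def Msp (s m : ℕ) (p : ℝ) {N : ℕ} (P : Fin N → Fin s → ℝ) : ℝ :=
  ((2 : ℝ) ^ (-(s * m : ℤ)) * ∑ T : Fin s → Fin (2 ^ m),
      ∫ Y in cube s, |Dloc (fun n => xorVec (P n) (Qpt m T)) Y| ^ p) ^ (1 / p)

/-- The standard normal distribution function `Φ`. -/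
def PhiCDF (w : ℝ) : ℝ :=
  (Real.sqrt (2 * Real.pi))⁻¹ * ∫ u in Set.Iio w, Real.exp (-u ^ 2 / 2)

/-- `χ_p`, the `p`-th absolute moment of the standard Gaussian. -/
def chiMoment (p : ℝ) : ℝ :=
  (Real.sqrt (2 * Real.pi))⁻¹ * ∫ u : ℝ, |u| ^ p * Real.exp (-u ^ 2 / 2)

/-- Digits `y_{n,i,j}` of the points of the dyadic digital sequence generated by
the `ℕ × ℕ` matrices `C` over `F_2`. -/
def seqDig (s : ℕ) (C : Fin s → ℕ → ℕ → ZMod 2) (n : ℕ) : Fin s → ℕ → ZMod 2 :=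
  fun i j => ∑ r ∈ Finset.range (n + 1), C i j r * (if n.testBit r then 1 else 0)

/-- The `n`-th point of the dyadic digital sequence generated by `C`. -/
def seqPoint (s : ℕ) (C : Fin s → ℕ → ℕ → ZMod 2) (n : ℕ) : Fin s → ℝ :=
  fun i => ∑' j : ℕ, ((seqDig s C n i j).val : ℝ) / 2 ^ (j + 1)

/-- The digital sequence generated by `C` is a dyadic digital `(T,s)`-sequence:
for all `m ≥ 1` and `k ≥ 0` the block `X_{k2^m}, …, X_{k2^m+2^m-1}` is a
`(T(m),m,s)`-net in base 2. -/
def IsTSeq (s : ℕ) (Tf : ℕ → ℕ) (C : Fin s → ℕ → ℕ → ZMod 2) : Prop :=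
  (∀ m, Tf m ≤ m) ∧
  ∀ m, 1 ≤ m → ∀ k : ℕ,
    IsNet (Tf m) m s fun n : Fin (2 ^ m) => seqPoint s C (k * 2 ^ m + (n : ℕ))

/-- The dual net `P_m^⊥` of the digital net generated by `C`. -/
def dualNet (m s : ℕ) (C : Fin s → Matrix (Fin m) (Fin m) (ZMod 2)) :
    Finset (Fin s → Fin m → ZMod 2) :=
  Finset.univ.filter fun mm => ∀ n : Fin (2 ^ m),
    (∑ i, ∑ j, mm i j * netDig m s C (n : ℕ) i j) = 0

/-- `ρ(b)`: the position of the last nonzero digit (`ρ(0) = 0`). -/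
def rhoF {m : ℕ} (b : Fin m → ZMod 2) : ℕ :=
  (Finset.univ.filter fun j => b j ≠ 0).sup fun j => (j : ℕ) + 1

/-- The 1-indexed component `𝔪_{i,a}` (as `0` or `1`), with the convention
`𝔪_{i,0} = 0`. -/
def mAt {m : ℕ} (b : Fin m → ZMod 2) (a : ℕ) : ℕ :=
  if h : 1 ≤ a ∧ a ≤ m then (b ⟨a - 1, by omega⟩).val else 0

/-- The 1-indexed digit of a digit array, with the convention that digit `0`
and digits beyond `m` are `0`. -/
def dAt {m : ℕ} (y : Fin m → Fin 2) (a : ℕ) : ℕ :=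
  if h : 1 ≤ a ∧ a ≤ m then (y ⟨a - 1, by omega⟩).val else 0

/-- `κ(A)`: the number of nonzero entries of `A`. -/
def kapF {s : ℕ} (A : Fin s → ℕ) : ℕ := (Finset.univ.filter fun i => A i ≠ 0).card

/-- `a₀(A) = a₁ + ⋯ + a_s`. -/
def a0F {s : ℕ} (A : Fin s → ℕ) : ℕ := ∑ i, A i

/-- `Λ_A(T ⊕ Y^{(m)})` as a function of the digit arrays `t`, `y` of `T`, `Y`:
`∑_{𝔪 ∈ P^{⊥,*}, ρ(𝔪_i) ≤ a_i} e(∑_i (∑_j 𝔪_{i,j}(t_{i,j}+y_{i,j}) + 𝔪_{i,a_i}))`,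
where `e(n) = exp(πin) = (-1)^n`. -/
def LamF (m s : ℕ) (C : Fin s → Matrix (Fin m) (Fin m) (ZMod 2)) (A : Fin s → ℕ)
    (t y : Fin s → Fin m → Fin 2) : ℝ :=
  ∑ mm ∈ (dualNet m s C).filter fun mm => mm ≠ 0 ∧ ∀ i, rhoF (mm i) ≤ A i,
    (-1 : ℝ) ^
      (∑ i, ((∑ j, (mm i j).val * ((t i j : ℕ) + (y i j : ℕ))) + mAt (mm i) (A i)))

/-- The Rademacher function `r_A(Y)` as a function of the digit array of `Y`. -/
def rademF {m s : ℕ} (A : Fin s → ℕ) (y : Fin s → Fin m → Fin 2) : ℝ :=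
  ∏ i, (-1 : ℝ) ^ dAt (y i) (A i)

/-- `Ψ_A = (-1)^{κ(A)} 2^{m-s-a₀(A)} r_A(Y) Λ_A(T ⊕ Y^{(m)})` at digit level. -/
def PsiF (m s : ℕ) (C : Fin s → Matrix (Fin m) (Fin m) (ZMod 2)) (A : Fin s → ℕ)
    (t y : Fin s → Fin m → Fin 2) : ℝ :=
  (-1 : ℝ) ^ kapF A * (2 : ℝ) ^ ((m : ℤ) - (s : ℤ) - (a0F A : ℤ)) *
    rademF A y * LamF m s C A t y

/-- `V₀ = 10 log₂ m`. -/
def V0 (m : ℕ) : ℝ := 10 * Real.logb 2 m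

/-- `I_{m,s,k} = {A ∈ I_m^s : max_i a_i = k, a₀(A) ∈ (m - t_m, m + V₀)}`. -/
def IndexSet (m s tm k : ℕ) : Finset (Fin s → ℕ) :=
  (Fintype.piFinset fun _ : Fin s => Finset.range (m + 1)).filter fun A =>
    Finset.univ.sup A = k ∧ ((m : ℝ) - tm < a0F A ∧ (a0F A : ℝ) < m + V0 m)

/-- `I_{m,s,m+1} = {A ∈ I_m^s : a₀(A) ≥ m + V₀}`. -/
def IndexTail (m s : ℕ) : Finset (Fin s → ℕ) :=
  (Fintype.piFinset fun _ : Fin s => Finset.range (m + 1)).filter fun A =>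
    (m : ℝ) + V0 m ≤ (a0F A : ℝ)

/-- `𝔇_k(T,Y) = ∑_{A ∈ I_{m,s,k}} Ψ_A` at digit level. -/
def DDk (m s tm : ℕ) (C : Fin s → Matrix (Fin m) (Fin m) (ZMod 2)) (k : ℕ)
    (t y : Fin s → Fin m → Fin 2) : ℝ :=
  ∑ A ∈ IndexSet m s tm k, PsiF m s C A t y

/-- `R(T,Y) = ∑_{A ∈ I_{m,s,m+1}} Ψ_A` at digit level. -/
def Rtail (m s : ℕ) (C : Fin s → Matrix (Fin m) (Fin m) (ZMod 2))
    (t y : Fin s → Fin m → Fin 2) : ℝ :=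
  ∑ A ∈ IndexTail m s, PsiF m s C A t y

/-- `E^{(m)}_{Y,T}(f)`: the average of `f` over all digit arrays. -/
def Em (m s : ℕ) (f : (Fin s → Fin m → Fin 2) → (Fin s → Fin m → Fin 2) → ℝ) : ℝ :=
  (2 : ℝ) ^ (-(2 * s * m : ℤ)) *
    ∑ t : Fin s → Fin m → Fin 2, ∑ y : Fin s → Fin m → Fin 2, f t y

/-- Keep the first `k` digits of `t`, replace the remaining ones by those of `t'`. -/
def mergeDig {m s : ℕ} (k : ℕ) (t t' : Fin s → Fin m → Fin 2) :
    Fin s → Fin m → Fin 2 :=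
  fun i j => if (j : ℕ) < k then t i j else t' i j

/-- The conditional expectation `E^{(m)}_{Y,T}(f | F_k)` with respect to the
σ-field `F_k` generated by the dyadic cubes of side `2^{-k}`: the average of `f`
over the digits of index `> k`, as a function of the digit arrays `t`, `y`. -/
def EmCond (m s k : ℕ)
    (f : (Fin s → Fin m → Fin 2) → (Fin s → Fin m → Fin 2) → ℝ)
    (t y : Fin s → Fin m → Fin 2) : ℝ :=
  (2 : ℝ) ^ (-(2 * s * m : ℤ)) *
    ∑ t' : Fin s → Fin m → Fin 2, ∑ y' : Fin s → Fin m → Fin 2,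
      f (mergeDig k t t') (mergeDig k y y')

/-- `Θ_{A₁,A₂,k} = E^{(m)}_{Y,T}(Ψ_{A₁}Ψ_{A₂} | F_{k-1}) - E^{(m)}_{Y,T}(Ψ_{A₁}Ψ_{A₂})`. -/
def ThetaF (m s : ℕ) (C : Fin s → Matrix (Fin m) (Fin m) (ZMod 2))
    (A1 A2 : Fin s → ℕ) (k : ℕ) (t y : Fin s → Fin m → Fin 2) : ℝ :=
  EmCond m s (k - 1) (fun t' y' => PsiF m s C A1 t' y' * PsiF m s C A2 t' y') t y -
    Em m s fun t' y' => PsiF m s C A1 t' y' * PsiF m s C A2 t' y'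

/-- `Υ_{d₁,d₂,d₃,J,k}` for a partition `J = (J₁,J₂,J₃)` of `{1,…,s}` and
`k = (k₁,k₂)`. -/
def Ups (m s tm : ℕ) (C : Fin s → Matrix (Fin m) (Fin m) (ZMod 2))
    (J1 J2 J3 : Finset (Fin s)) (k1 k2 : ℕ) : ℝ :=
  ∑ A1 ∈ IndexSet m s tm k1, ∑ A2 ∈ IndexSet m s tm k1,
    ∑ A3 ∈ IndexSet m s tm k2, ∑ A4 ∈ IndexSet m s tm k2,
      (Em m s fun t y => ThetaF m s C A1 A2 k1 t y * ThetaF m s C A3 A4 k2 t y) *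
        (if (Finset.univ.filter fun i => A1 i = A2 i) = J1 ∧
            (Finset.univ.filter fun i => A1 i < A2 i) = J2 ∧
            (Finset.univ.filter fun i => A2 i < A1 i) = J3 ∧
            (Finset.univ.filter fun i => A3 i = A4 i) = J1 ∧
            (Finset.univ.filter fun i => A3 i < A4 i) = J2 ∧
            (Finset.univ.filter fun i => A4 i < A3 i) = J3 then (1 : ℝ) else 0)

/-- The array of the first `m` dyadic digits of the coordinates of `Y`. -/
def digitsOf (m s : ℕ) (Y : Fin s → ℝ) : Fin s → Fin m → Fin 2 :=
  fun i j => ⟨bdigit ((j : ℕ) + 1) (Y i), by unfold bdigit; omega⟩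

/-- Truncation `y^{(m)}` to the first `m` dyadic digits. -/
def truncR (m : ℕ) (y : ℝ) : ℝ :=
  ∑ j ∈ Finset.range m, (bdigit (j + 1) y : ℝ) / 2 ^ (j + 1)

/-- The elementary interval `Π_a` (`Π_0 = [0,1)`, `Π_a = [2^{-a}, 2^{1-a})`). -/
def PiBox (a : ℕ) : Set ℝ :=
  if a = 0 then Set.Ico 0 1 else Set.Ico ((2 : ℝ) ^ (-(a : ℤ))) ((2 : ℝ) ^ (1 - (a : ℤ)))

/-- `λ_A(Y) = 1_{Π_A}(Y) - vol(Π_A)`. -/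
def lamA {s : ℕ} (A : Fin s → ℕ) (Y : Fin s → ℝ) : ℝ :=
  (if ∀ i, Y i ∈ PiBox (A i) then (1 : ℝ) else 0) - (2 : ℝ) ^ (-(a0F A : ℤ))

/-- The micro-local discrepancy `λ_A(P_m^{(m)} ⊕ T ⊕ Y^{(m)})`. -/
def lamNet (m s : ℕ) (C : Fin s → Matrix (Fin m) (Fin m) (ZMod 2))
    (T Y : Fin s → ℝ) (A : Fin s → ℕ) : ℝ :=
  ∑ n : Fin (2 ^ m),
    lamA A fun i =>
      xorReal (xorReal (truncR m (netPoint m s C (n : ℕ) i)) (T i)) (truncR m (Y i))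

/-- The Rademacher function `r_A(Y)` for a real point `Y`. -/
def rademReal {s : ℕ} (A : Fin s → ℕ) (Y : Fin s → ℝ) : ℝ :=
  ∏ i, if A i = 0 then (1 : ℝ) else 1 - 2 * (bdigit (A i) (Y i) : ℝ)

/-- The truncated discrepancy
`D^{(m)}(P_m ⊕ T, Y) = 2^{-s} ∑_{A ∈ I_m^s} (-1)^{κ(A)} λ_A(P_m^{(m)} ⊕ T ⊕ Y^{(m)}) r_A(Y)`. -/
def Dm (m s : ℕ) (C : Fin s → Matrix (Fin m) (Fin m) (ZMod 2)) (T Y : Fin s → ℝ) : ℝ :=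
  (2 : ℝ) ^ (-(s : ℤ)) *
    ∑ A ∈ Fintype.piFinset fun _ : Fin s => Finset.range (m + 1),
      (-1 : ℝ) ^ kapF A * lamNet m s C T Y A * rademReal A Y

/-- `𝔼_{Y,T,m}(f) = 2^{-sm} ∑_{T ∈ Q^s(2^m)} ∫_{[0,1]^s} f(T,Y) dY`. -/
def EE (m s : ℕ) (f : (Fin s → ℝ) → (Fin s → ℝ) → ℝ) : ℝ :=
  (2 : ℝ) ^ (-(s * m : ℤ)) * ∑ T : Fin s → Fin (2 ^ m), ∫ Y in cube s, f (Qpt m T) Y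
/-! A point whose coordinates have digit strings `g_i` lies in `Π_A` iff, in each coordinate,
the first `a_i` digits are those of `2^{-a_i}`. Since only the digits of index `≤ a_i` are
constrained, the indicator is the character sum
`1_{Π_a}(g) = 2^{-a} ∑_{ρ(b) ≤ a} (-1)^{b·g + b_a}`.
Taking the product over the coordinates and summing over the digital net, the sum
`∑_n (-1)^{𝔪·x_n}` equals `2^m` on the dual net and vanishes off it, and the term `𝔪 = 0`
cancels the volume `2^{-a₀(A)}` of the box. -/

open Finset Matrix

def digitVal {m : ℕ} (g : Fin m → ZMod 2) : ℝ :=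
  ∑ j : Fin m, ((g j).val : ℝ) / 2 ^ ((j : ℕ) + 1)

def binDigits (m : ℕ) (x : ℝ) : Fin m → ZMod 2 := fun j => (bdigit ((j : ℕ) + 1) x : ZMod 2)

lemma bdigit_lt_two (a : ℕ) (x : ℝ) : bdigit a x < 2 := Nat.mod_lt _ two_pos

lemma bdigit_eq_natFloor (a : ℕ) (x : ℝ) : bdigit a x = ⌊x * 2 ^ a⌋₊ % 2 := by
  rw [bdigit, Int.floor_toNat]

lemma digitVal_succ {m : ℕ} (g : Fin (m + 1) → ZMod 2) :
    digitVal g = ((g 0).val + digitVal (Fin.tail g)) / 2 := by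
  simp only [digitVal, Fin.sum_univ_succ, Fin.val_zero, Fin.val_succ, Fin.tail, add_div,
    Finset.sum_div, pow_succ, div_div]
  norm_num

lemma digitVal_nonneg {m : ℕ} (g : Fin m → ZMod 2) : 0 ≤ digitVal g :=
  Finset.sum_nonneg fun _ _ => by positivity

lemma digitVal_lt_one : ∀ {m : ℕ} (g : Fin m → ZMod 2), digitVal g < 1
  | 0, _ => by simp [digitVal]
  | m + 1, g => by
    have hg : ((g 0).val : ℝ) ≤ 1 := by exact_mod_cast Nat.le_of_lt_succ (ZMod.val_lt (g 0))
    rw [digitVal_succ]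
    linarith [digitVal_lt_one (Fin.tail g)]

lemma digitVal_mem_Ico {m : ℕ} (g : Fin m → ZMod 2) : digitVal g ∈ Set.Ico 0 1 :=
  ⟨digitVal_nonneg g, digitVal_lt_one g⟩

lemma bdigit_digitVal : ∀ {m : ℕ} (g : Fin m → ZMod 2) (a : ℕ),
    bdigit (a + 1) (digitVal g) = if h : a < m then (g ⟨a, h⟩).val else 0
  | 0, g, a => by simp [bdigit, digitVal]
  | m + 1, g, a => by
    have hfloor : ⌊digitVal g * 2 ^ (a + 1)⌋₊ =
        ⌊digitVal (Fin.tail g) * 2 ^ a⌋₊ + (g 0).val * 2 ^ a := by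
      rw [← Nat.floor_add_natCast (by have := digitVal_nonneg (Fin.tail g); positivity)]
      congr 1
      rw [digitVal_succ, pow_succ]
      push_cast
      ring
    rw [bdigit_eq_natFloor, hfloor]
    cases a with
    | zero =>
      rw [Nat.floor_eq_zero.mpr (by simpa using digitVal_lt_one (Fin.tail g))]
      simp [Nat.mod_eq_of_lt (ZMod.val_lt (g 0))]
    | succ a =>
      rw [show (g 0).val * 2 ^ (a + 1) = (g 0).val * 2 ^ a * 2 by ring,
        Nat.add_mul_mod_self_right, ← bdigit_eq_natFloor,
        bdigit_digitVal (Fin.tail g) a]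
      simp [Fin.tail]

lemma xorReal_digitVal {m : ℕ} (g h : Fin m → ZMod 2) :
    xorReal (digitVal g) (digitVal h) = digitVal (g + h) := by
  rw [xorReal, tsum_eq_sum (s := range m), Finset.sum_range]
  · conv_rhs => rw [digitVal]
    refine Finset.sum_congr rfl fun j _ => ?_
    simp only [bdigit_digitVal, dif_pos j.2, Fin.eta, Pi.add_apply, ZMod.val_add]
  · intro a ha
    simp [bdigit_digitVal, show ¬a < m by simpa using ha]

lemma truncR_eq_digitVal (m : ℕ) (x : ℝ) : truncR m x = digitVal (binDigits m x) := by
  simp [truncR, digitVal, binDigits, Finset.sum_range, ZMod.val_natCast_of_lt (bdigit_lt_two _ x)]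

lemma binDigits_digitVal {m : ℕ} (g : Fin m → ZMod 2) : binDigits m (digitVal g) = g := by
  ext j
  simp [binDigits, bdigit_digitVal]

lemma netPoint_eq_digitVal (m s : ℕ) (C : Fin s → Matrix (Fin m) (Fin m) (ZMod 2)) (n : ℕ)
    (i : Fin s) : netPoint m s C n i = digitVal (netDig m s C n i) := rfl

lemma xorReal_truncR_digitVal {m : ℕ} (g : Fin m → ZMod 2) (x : ℝ) :
    xorReal (truncR m (digitVal g)) (truncR m x) = digitVal (g + binDigits m x) := by
  rw [truncR_eq_digitVal, truncR_eq_digitVal, binDigits_digitVal, xorReal_digitVal]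

lemma natFloor_mul_two_pow_succ (x : ℝ) (k : ℕ) :
    ⌊x * 2 ^ (k + 1)⌋₊ = 2 * ⌊x * 2 ^ k⌋₊ + bdigit (k + 1) x := by
  have hdiv : ⌊x * 2 ^ (k + 1)⌋₊ / 2 = ⌊x * 2 ^ k⌋₊ := by
    rw [← Nat.floor_div_ofNat]
    congr 1
    ring
  rw [bdigit_eq_natFloor, ← hdiv, Nat.div_add_mod]

lemma natFloor_mul_two_pow_eq_zero_iff {x : ℝ} (hx : x ∈ Set.Ico 0 1) :
    ∀ k : ℕ, ⌊x * 2 ^ k⌋₊ = 0 ↔ ∀ j < k, bdigit (j + 1) x = 0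
  | 0 => by simp [Nat.floor_eq_zero.mpr hx.2]
  | k + 1 => by
    rw [natFloor_mul_two_pow_succ x, Nat.forall_lt_succ_right,
      ← natFloor_mul_two_pow_eq_zero_iff hx k]
    omega

lemma mem_PiBox_iff_bdigit {x : ℝ} (hx : x ∈ Set.Ico 0 1) :
    ∀ a : ℕ, x ∈ PiBox a ↔ ∀ j < a, bdigit (j + 1) x = if j + 1 = a then 1 else 0
  | 0 => by simpa [PiBox] using hx
  | k + 1 => by
    have hbox : x ∈ PiBox (k + 1) ↔ ⌊x * 2 ^ (k + 1)⌋₊ = 1 := by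
      rw [Nat.floor_eq_iff (by have := hx.1; positivity), PiBox, if_neg k.succ_ne_zero,
        Set.mem_Ico, show (1 : ℤ) - (k + 1 : ℕ) = -(k : ℕ) by push_cast; ring,
        _root_.zpow_neg, _root_.zpow_neg, zpow_natCast, zpow_natCast, ← one_div, ← one_div,
        div_le_iff₀ (by positivity), lt_div_iff₀ (by positivity),
        show x * 2 ^ (k + 1) = 2 * (x * 2 ^ k) by ring]
      push_cast
      constructor <;> rintro ⟨h1, h2⟩ <;> constructor <;> linarith
    rw [hbox, natFloor_mul_two_pow_succ x, Nat.forall_lt_succ_right]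
    have hd := bdigit_lt_two (k + 1) x
    have hz := natFloor_mul_two_pow_eq_zero_iff hx k
    have hsame : ∀ j < k,
        (bdigit (j + 1) x = if j + 1 = k + 1 then 1 else 0) ↔ bdigit (j + 1) x = 0 :=
      fun j hj => by rw [if_neg (by omega)]
    rw [forall₂_congr hsame, ← hz, if_pos rfl]
    omega

-- The digit string of `2^{-a}`; it is zero when `a = 0` or `a > m`.
def halfPowDigits (m a : ℕ) : Fin m → ZMod 2 := fun j => if (j : ℕ) + 1 = a then 1 else 0

lemma digitVal_mem_PiBox_iff {m a : ℕ} (g : Fin m → ZMod 2) (ha : a ≤ m) :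
    digitVal g ∈ PiBox a ↔ ∀ j : Fin m, (j : ℕ) < a → g j = halfPowDigits m a j := by
  rw [mem_PiBox_iff_bdigit (digitVal_mem_Ico g)]
  constructor
  · intro h j hj
    have := h j hj
    rw [bdigit_digitVal, dif_pos j.2] at this
    apply ZMod.val_injective
    rw [halfPowDigits]
    split_ifs at this ⊢ <;> simpa [ZMod.val_one] using this
  · intro h j hj
    rw [bdigit_digitVal, dif_pos (by omega), h _ hj, halfPowDigits]
    split_ifs <;> rfl

def signChar : AddChar (ZMod 2) ℝ := AddChar.zmodChar 2 (by norm_num : (-1 : ℝ) ^ 2 = 1)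

lemma signChar_apply (x : ZMod 2) : signChar x = (-1) ^ x.val := AddChar.zmodChar_apply _ _

lemma signChar_natCast (n : ℕ) : signChar n = (-1) ^ n := by
  rw [signChar_apply, ZMod.val_natCast, ← neg_one_pow_eq_pow_mod_two]

lemma one_add_signChar (x : ZMod 2) : 1 + signChar x = if x = 0 then 2 else 0 := by
  obtain rfl | rfl : x = 0 ∨ x = 1 := by revert x; decide
  all_goals norm_num [signChar_apply, ZMod.val_one]

lemma signChar_sum {ι : Type*} (s : Finset ι) (f : ι → ZMod 2) :
    signChar (∑ i ∈ s, f i) = ∏ i ∈ s, signChar (f i) := by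
  classical
  induction s using Finset.induction_on with
  | empty => simp
  | insert a s ha ih => rw [sum_insert ha, prod_insert ha, AddChar.map_add_eq_mul, ih]

lemma sum_signChar_dotProduct {ι : Type*} [Fintype ι] [DecidableEq ι] (S : Finset ι)
    (u : ι → ZMod 2) :
    ∑ b ∈ Fintype.piFinset (fun j => if j ∈ S then univ else {0}), signChar (b ⬝ᵥ u) =
      if ∀ j ∈ S, u j = 0 then 2 ^ #S else 0 := by
  have hfactor : ∀ j, ∑ v ∈ (if j ∈ S then univ else {0}), signChar (v * u j) =
      if j ∈ S then (if u j = 0 then 2 else 0) else 1 := by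
    intro j
    by_cases hj : j ∈ S
    · rw [if_pos hj, if_pos hj, ← one_add_signChar,
        show (univ : Finset (ZMod 2)) = {0, 1} by decide, sum_pair zero_ne_one, zero_mul,
        one_mul, AddChar.map_zero_eq_one]
    · rw [if_neg hj, if_neg hj, sum_singleton, zero_mul, AddChar.map_zero_eq_one]
  simp_rw [dotProduct, signChar_sum]
  rw [← prod_univ_sum (fun j => if j ∈ S then univ else {0}) (fun j v => signChar (v * u j))]
  rw [Finset.prod_congr rfl fun j _ => hfactor j, Finset.prod_ite_mem,
    univ_inter, prod_ite_zero, prod_const]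
  congr 1

lemma rhoF_le_iff {m : ℕ} (b : Fin m → ZMod 2) (a : ℕ) :
    rhoF b ≤ a ↔ ∀ j : Fin m, a ≤ j → b j = 0 := by
  simp only [rhoF, Finset.sup_le_iff, mem_filter, mem_univ, true_and]
  exact forall_congr' fun j =>
    ⟨fun h hj => by_contra fun hb => by have := h hb; omega,
      fun h hb => by_contra fun hc => hb (h (by omega))⟩

lemma natCast_mAt {m : ℕ} (b : Fin m → ZMod 2) (a : ℕ) :
    (mAt b a : ZMod 2) = b ⬝ᵥ halfPowDigits m a := by
  rw [mAt]
  split_ifs with ha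
  · rw [ZMod.natCast_zmod_val, dotProduct, Finset.sum_eq_single ⟨a - 1, by omega⟩]
    · simp [halfPowDigits, show a - 1 + 1 = a by omega]
    · intro j _ hj
      simp [halfPowDigits, Fin.ext_iff] at hj ⊢
      omega
    · simp
  · refine (Finset.sum_eq_zero fun j _ => ?_).symm
    simp [halfPowDigits]
    omega

lemma sum_signChar_rhoF_le {m a : ℕ} (g : Fin m → ZMod 2) (ha : a ≤ m) :
    ∑ b with rhoF b ≤ a, signChar (b ⬝ᵥ g + mAt b a) =
      if digitVal g ∈ PiBox a then 2 ^ a else 0 := by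
  have hset : ({b | rhoF b ≤ a} : Finset (Fin m → ZMod 2)) =
      Fintype.piFinset fun j =>
        if j ∈ ({j | (j : ℕ) < a} : Finset (Fin m)) then univ else {0} := by
    ext b
    simp only [rhoF_le_iff, mem_filter, mem_univ, true_and, Fintype.mem_piFinset]
    refine forall_congr' fun j => ?_
    split_ifs with hj <;> simp_all
  simp_rw [hset, natCast_mAt, ← dotProduct_add]
  rw [sum_signChar_dotProduct, Fin.card_filter_val_lt, min_eq_right ha,
    digitVal_mem_PiBox_iff g ha]
  congr 1
  simp [add_eq_zero_iff_eq_neg, ZMod.neg_eq_self_mod_two]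

lemma indicator_PiBox_digitVal_eq_sum {s m : ℕ} (A : Fin s → ℕ) (hA : ∀ i, A i ≤ m)
    (g : Fin s → Fin m → ZMod 2) :
    (if ∀ i, digitVal (g i) ∈ PiBox (A i) then (1 : ℝ) else 0) =
      2 ^ (-(a0F A : ℤ)) * ∑ mm : Fin s → Fin m → ZMod 2 with ∀ i, rhoF (mm i) ≤ A i,
        signChar (∑ i, (mm i ⬝ᵥ g i + mAt (mm i) (A i))) := by
  have hfactor : ∑ mm : Fin s → Fin m → ZMod 2 with ∀ i, rhoF (mm i) ≤ A i,
      signChar (∑ i, (mm i ⬝ᵥ g i + mAt (mm i) (A i))) =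
        ∏ i, ∑ b with rhoF b ≤ A i, signChar (b ⬝ᵥ g i + mAt b (A i)) := by
    simp_rw [sum_filter, Fintype.prod_sum, prod_ite_zero, signChar_sum, mem_univ, true_implies]
  rw [hfactor]
  simp_rw [sum_signChar_rhoF_le (g _) (hA _)]
  rw [prod_ite_zero, prod_pow_eq_pow_sum]
  simp only [mem_univ, true_implies]
  split_ifs
  · rw [a0F, _root_.zpow_neg, zpow_natCast, inv_mul_cancel₀ (by positivity)]
  · rw [mul_zero]

lemma lamA_digitVal_eq_sum {s m : ℕ} (A : Fin s → ℕ) (hA : ∀ i, A i ≤ m)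
    (g : Fin s → Fin m → ZMod 2) :
    lamA A (fun i => digitVal (g i)) =
      2 ^ (-(a0F A : ℤ)) *
        ∑ mm : Fin s → Fin m → ZMod 2 with mm ≠ 0 ∧ ∀ i, rhoF (mm i) ≤ A i,
          signChar (∑ i, (mm i ⬝ᵥ g i + mAt (mm i) (A i))) := by
  have hzero :
      (0 : Fin s → Fin m → ZMod 2) ∈ ({mm | ∀ i, rhoF (mm i) ≤ A i} : Finset _) := by
    simp [rhoF_le_iff]
  have herase : ({mm | ∀ i, rhoF (mm i) ≤ A i} : Finset (Fin s → Fin m → ZMod 2)).erase 0 =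
      ({mm | mm ≠ 0 ∧ ∀ i, rhoF (mm i) ≤ A i} : Finset (Fin s → Fin m → ZMod 2)) := by
    ext mm
    simp
  rw [lamA, indicator_PiBox_digitVal_eq_sum A hA g, ← add_sum_erase _ _ hzero, herase]
  simp [natCast_mAt, mul_add]

lemma bijective_testBit (m : ℕ) :
    Function.Bijective fun (n : Fin (2 ^ m)) (r : Fin m) =>
      if (n : ℕ).testBit r then (1 : ZMod 2) else 0 := by
  rw [Fintype.bijective_iff_injective_and_card]
  refine ⟨fun n n' h => Fin.ext (Nat.eq_of_testBit_eq fun r => ?_), by simp [ZMod.card]⟩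
  by_cases hr : r < m
  · have := congr_fun h ⟨r, hr⟩
    simp only at this
    split_ifs at this <;> simp_all
  · have hle : 2 ^ m ≤ 2 ^ r := Nat.pow_le_pow_right two_pos (not_lt.mp hr)
    rw [Nat.testBit_lt_two_pow (n.2.trans_le hle), Nat.testBit_lt_two_pow (n'.2.trans_le hle)]

lemma sum_signChar_netDig {s m : ℕ} (C : Fin s → Matrix (Fin m) (Fin m) (ZMod 2))
    (mm : Fin s → Fin m → ZMod 2) :
    ∑ n : Fin (2 ^ m), signChar (∑ i, mm i ⬝ᵥ netDig m s C n i) =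
      if mm ∈ dualNet m s C then 2 ^ m else 0 := by
  set w := ∑ i, mm i ᵥ* C i
  have hlin : ∀ n : Fin (2 ^ m), ∑ i, mm i ⬝ᵥ netDig m s C n i =
      w ⬝ᵥ fun r => if (n : ℕ).testBit r then 1 else 0 := fun n => by
    simp_rw [w, sum_dotProduct, ← dotProduct_mulVec]
    rfl
  have hdual : mm ∈ dualNet m s C ↔ w = 0 := by
    rw [← dotProduct_eq_zero_iff, (bijective_testBit m).2.forall]
    simp only [dualNet, mem_filter, mem_univ, true_and, ← hlin]
    rfl
  simp_rw [hlin, dotProduct_comm w]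
  have := sum_signChar_dotProduct (univ : Finset (Fin m)) w
  simp only [mem_univ, if_true, true_implies, Fintype.piFinset_univ, card_univ,
    Fintype.card_fin] at this
  rw [(bijective_testBit m).sum_comp (fun b => signChar (b ⬝ᵥ w)), this]
  simp only [hdual, funext_iff, Pi.zero_apply]

lemma sum_lamA_netDig_add {s m : ℕ} (C : Fin s → Matrix (Fin m) (Fin m) (ZMod 2))
    (A : Fin s → ℕ) (hA : ∀ i, A i ≤ m) (y : Fin s → Fin m → ZMod 2) :
    ∑ n : Fin (2 ^ m), lamA A (fun i => digitVal (netDig m s C n i + y i)) =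
      2 ^ ((m : ℤ) - a0F A) *
        ∑ mm ∈ (dualNet m s C).filter fun mm => mm ≠ 0 ∧ ∀ i, rhoF (mm i) ≤ A i,
          signChar (∑ i, (mm i ⬝ᵥ y i + mAt (mm i) (A i))) := by
  have hsplit : ∀ (n : Fin (2 ^ m)) (mm : Fin s → Fin m → ZMod 2),
      signChar (∑ i, (mm i ⬝ᵥ (netDig m s C n i + y i) + mAt (mm i) (A i))) =
        signChar (∑ i, mm i ⬝ᵥ netDig m s C n i) *
          signChar (∑ i, (mm i ⬝ᵥ y i + mAt (mm i) (A i))) := fun n mm => by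
    rw [← AddChar.map_add_eq_mul, ← sum_add_distrib]
    simp only [dotProduct_add, add_assoc]
  rw [sum_congr rfl fun (n : Fin (2 ^ m)) _ =>
    lamA_digitVal_eq_sum A hA fun i => netDig m s C n i + y i]
  simp_rw [hsplit]
  rw [← mul_sum, sum_comm]
  simp_rw [← sum_mul, sum_signChar_netDig, ite_mul, zero_mul, ← sum_filter, ← mul_sum]
  have hdual :
      ({mm | mm ≠ 0 ∧ ∀ i, rhoF (mm i) ≤ A i} : Finset (Fin s → Fin m → ZMod 2)).filter
        (· ∈ dualNet m s C) =
      (dualNet m s C).filter fun mm => mm ≠ 0 ∧ ∀ i, rhoF (mm i) ≤ A i := by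
    ext mm
    simp [and_comm]
  rw [hdual, ← mul_assoc, ← zpow_natCast, ← zpow_add₀ two_ne_zero, neg_add_eq_sub]

theorem statement6_general (s m : ℕ)
    (C : Fin s → Matrix (Fin m) (Fin m) (ZMod 2))
    (A : Fin s → ℕ) (hA : ∀ i, A i ≤ m) (Y : Fin s → ℝ) :
    (∑ n : Fin (2 ^ m),
        lamA A fun i => xorReal (truncR m (netPoint m s C (n : ℕ) i)) (truncR m (Y i))) =
      (2 : ℝ) ^ ((m : ℤ) - (a0F A : ℤ)) *
        LamF m s C A (fun _ _ => (0 : Fin 2)) (digitsOf m s Y) := by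
  simp_rw [netPoint_eq_digitVal, xorReal_truncR_digitVal]
  rw [sum_lamA_netDig_add C A hA, LamF]
  congr 1
  refine sum_congr rfl fun mm _ => ?_
  rw [← signChar_natCast]
  congr 1
  push_cast
  simp [dotProduct, binDigits, digitsOf]

/-- Walsh-series representation of the micro-local discrepancy,
`λ_A(P_m ⊕ Y^{(m)}) = 2^{m-a₀(A)} ∑_{𝔪 ∈ P^{⊥,*}, ρ(𝔪_i) ≤ a_i}
e(∑_i (∑_j 𝔪_{i,j} y_{i,j} + 𝔪_{i,a_i}))`. -/
theorem statement6 (s m tm : ℕ) (hs : 2 ≤ s)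
    (C : Fin s → Matrix (Fin m) (Fin m) (ZMod 2))
    (hnet : IsNet tm m s fun n : Fin (2 ^ m) => netPoint m s C (n : ℕ))
    (A : Fin s → ℕ) (hA : ∀ i, A i ≤ m) (Y : Fin s → ℝ)
    (hY : ∀ i, Y i ∈ Set.Ico (0 : ℝ) 1) :
    (∑ n : Fin (2 ^ m),
        lamA A fun i => xorReal (truncR m (netPoint m s C (n : ℕ) i)) (truncR m (Y i))) =
      (2 : ℝ) ^ ((m : ℤ) - (a0F A : ℤ)) *
        LamF m s C A (fun _ _ => (0 : Fin 2)) (digitsOf m s Y) :=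
  statement6_general s m C A hA Y
end
end

section
/- Let P_m be a dyadic digital (t_m, m, s)-net in base 2. Then for every A ∈ I_m^s and all T ∈ Q^s(2^m), Y ∈ [0,1)^s, one has |Λ_A(T ⊕ Y^{(m)})| ≤ 2^{a_0(A) − m + t_m + 1} and consequently |Ψ_A| = 2^{m−s−a_0(A)} |Λ_A(T ⊕ Y^{(m)})| ≤ 2^{t_m + 1}. -/
open MeasureTheory Filter

noncomputable section

attribute [local instance] Classical.propDecidable

lemma sum_range_two_pow' (i : ℕ) : (∑ k ∈ Finset.range i, 2 ^ k) = 2 ^ i - 1 := by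
  induction i with
  | zero => simp
  | succ n ih => rw [Finset.sum_range_succ, ih]; have := Nat.one_le_two_pow (n := n); omega

-- digit lemma
lemma digit_of_sum (n : ℕ) (c : ℕ → ℕ) (hc : ∀ k, c k ≤ 1) :
    ∀ i < n, (∑ k ∈ Finset.range n, c k * 2 ^ k) / 2 ^ i % 2 = c i := by
  intro i hi
  have hsplit : (∑ k ∈ Finset.range n, c k * 2 ^ k) =
      (∑ k ∈ Finset.range i, c k * 2 ^ k) + ∑ k ∈ Finset.Ico i n, c k * 2 ^ k := by
    have h := Finset.sum_Ico_consecutive (fun k => c k * 2 ^ k) (Nat.zero_le i) hi.le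
    rw [Finset.range_eq_Ico, Finset.range_eq_Ico]
    exact h.symm
  have hlow : (∑ k ∈ Finset.range i, c k * 2 ^ k) < 2 ^ i := by
    calc (∑ k ∈ Finset.range i, c k * 2 ^ k) ≤ ∑ k ∈ Finset.range i, 1 * 2 ^ k :=
          Finset.sum_le_sum fun k _ => Nat.mul_le_mul_right _ (hc k)
    _ = 2 ^ i - 1 := by simp [sum_range_two_pow']
    _ < 2 ^ i := by have := Nat.one_le_two_pow (n := i); omega
  have h2 : (∑ k ∈ Finset.Ico (i+1) n, c k * 2 ^ k) =
      2 ^ i * (2 * ∑ k ∈ Finset.range (n - (i+1)), c (i + 1 + k) * 2 ^ k) := by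
    rw [Finset.sum_Ico_eq_sum_range, Finset.mul_sum, Finset.mul_sum]
    apply Finset.sum_congr rfl
    intro k _
    rw [pow_add, pow_succ]
    ring
  have hIco : (∑ k ∈ Finset.Ico i n, c k * 2 ^ k) =
      2 ^ i * (c i + 2 * ∑ k ∈ Finset.range (n - (i+1)), c (i + 1 + k) * 2 ^ k) := by
    rw [← Finset.sum_Ico_consecutive _ (Nat.le_succ i) hi, h2]
    have h1 : (∑ k ∈ Finset.Ico i (i+1), c k * 2 ^ k) = c i * 2 ^ i := by simp
    rw [h1]; ring
  rw [hsplit, hIco, Nat.add_mul_div_left _ _ (Nat.two_pow_pos i),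
    Nat.div_eq_of_lt hlow, Nat.zero_add, Nat.add_mul_mod_self_left]
  exact Nat.mod_eq_of_lt (by have := hc i; omega)

lemma digit_extract {m d : ℕ} (hd : d ≤ m) (b : Fin m → ℕ) (hb : ∀ j, b j ≤ 1)
    (a : ℕ) (ha : a < 2 ^ d)
    (h1 : (a : ℝ) / 2 ^ d ≤ ∑ j : Fin m, (b j : ℝ) / 2 ^ ((j : ℕ) + 1))
    (h2 : (∑ j : Fin m, (b j : ℝ) / 2 ^ ((j : ℕ) + 1)) < ((a : ℝ) + 1) / 2 ^ d) :
    ∀ j : Fin m, (j : ℕ) < d → b j = a / 2 ^ (d - 1 - (j : ℕ)) % 2 := by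
  classical
  set c : ℕ → ℕ := fun k => if h : k < m then b ⟨m - 1 - k, by omega⟩ else 0 with hc_def
  have hc : ∀ k, c k ≤ 1 := by
    intro k; simp only [hc_def]; split
    · exact hb _
    · norm_num
  set Nf : ℕ := ∑ k ∈ Finset.range m, c k * 2 ^ k with hNf_def
  have key : (Nf : ℝ) = (∑ j : Fin m, (b j : ℝ) / 2 ^ ((j : ℕ) + 1)) * 2 ^ m := by
    rw [Finset.sum_mul]
    push_cast [hNf_def]
    refine Finset.sum_bij' (fun k hk => (⟨m - 1 - k, by
        simp only [Finset.mem_range] at hk; omega⟩ : Fin m))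
      (fun j _ => m - 1 - (j : ℕ)) ?_ ?_ ?_ ?_ ?_
    · intro k hk; exact Finset.mem_univ _
    · intro j _; simp only [Finset.mem_range]; omega
    · intro k hk; simp only [Finset.mem_range] at hk; show m - 1 - (m - 1 - k) = k; omega
    · intro j _; have := j.isLt; apply Fin.ext; show m - 1 - (m - 1 - (j : ℕ)) = (j : ℕ); omega
    · intro k hk
      simp only [Finset.mem_range] at hk
      have h1 : c k = b ⟨m - 1 - k, by omega⟩ := by simp [hc_def, hk]
      rw [h1]
      have h2 : m - 1 - (m - 1 - k) = k := by omega
      have h3 : ((⟨m - 1 - k, by omega⟩ : Fin m) : ℕ) = m - 1 - k := rfl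
      rw [h3, div_mul_eq_mul_div, eq_div_iff (by positivity)]
      have hp : (2 : ℝ) ^ k * 2 ^ (m - 1 - k + 1) = 2 ^ m := by
        rw [← pow_add]; congr 1; omega
      rw [mul_assoc, hp]
  have hNfm : Nf < 2 ^ m := by
    have : Nf ≤ ∑ k ∈ Finset.range m, 1 * 2 ^ k :=
      Finset.sum_le_sum fun k _ => Nat.mul_le_mul_right _ (hc k)
    simp only [one_mul, sum_range_two_pow'] at this
    have := Nat.one_le_two_pow (n := m); omega
  have hS : (∑ j : Fin m, (b j : ℝ) / 2 ^ ((j : ℕ) + 1)) = (Nf : ℝ) / 2 ^ m := by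
    rw [key]; field_simp
  have pow_split : (2 : ℕ) ^ m = 2 ^ (m - d) * 2 ^ d := by
    rw [← pow_add]; congr 1; omega
  have e1 : a * 2 ^ (m - d) ≤ Nf := by
    rw [hS] at h1
    rw [div_le_div_iff₀ (by positivity) (by positivity)] at h1
    have : (a : ℕ) * 2 ^ m ≤ Nf * 2 ^ d := by exact_mod_cast h1
    rw [pow_split, ← Nat.mul_assoc] at this
    exact Nat.le_of_mul_le_mul_right this (Nat.two_pow_pos d)
  have e2 : Nf < (a + 1) * 2 ^ (m - d) := by
    rw [hS] at h2
    rw [div_lt_div_iff₀ (by positivity) (by positivity)] at h2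
    have : Nf * 2 ^ d < (a + 1) * 2 ^ m := by exact_mod_cast h2
    rw [pow_split, ← Nat.mul_assoc] at this
    exact Nat.lt_of_mul_lt_mul_right this
  have hdiv : Nf / 2 ^ (m - d) = a := Nat.div_eq_of_lt_le e1 (by simpa [Nat.succ_eq_add_one] using e2)
  intro j hj
  have hjm : (j : ℕ) < m := j.2
  have hb1 : b j = c (m - 1 - (j : ℕ)) := by
    have hk : m - 1 - (j : ℕ) < m := by omega
    simp only [hc_def, dif_pos hk]
    congr 1
    ext
    simp only []
    omega
  have hb2 : c (m - 1 - (j : ℕ)) = Nf / 2 ^ (m - 1 - (j : ℕ)) % 2 :=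
    (digit_of_sum m c hc _ (by omega)).symm
  have hexp : m - d + (d - 1 - (j : ℕ)) = m - 1 - (j : ℕ) := by omega
  rw [hb1, hb2, ← hdiv, Nat.div_div_eq_div_mul, ← pow_add, hexp]

section Aux7

lemma rhoF_le_apply {m : ℕ} {b : Fin m → ZMod 2} {c : ℕ} (h : rhoF b ≤ c) {j : Fin m}
    (hj : c ≤ (j : ℕ)) : b j = 0 := by
  by_contra hb
  have hmem : j ∈ Finset.univ.filter fun j => b j ≠ 0 := by simp [hb]
  have h2 : (j : ℕ) + 1 ≤ rhoF b := Finset.le_sup (f := fun j : Fin m => (j : ℕ) + 1) hmem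
  omega

lemma rhoF_le_of {m : ℕ} {b : Fin m → ZMod 2} {c : ℕ}
    (h : ∀ j : Fin m, c ≤ (j : ℕ) → b j = 0) : rhoF b ≤ c := by
  apply Finset.sup_le
  intro j hj
  simp only [Finset.mem_filter] at hj
  by_contra hc
  exact hj.2 (h j (by omega))

lemma zmod2_cases (x : ZMod 2) : x = 0 ∨ x = 1 := by revert x; decide

lemma zmod2_of_val_eq_one {x : ZMod 2} (h : x.val = 1) : x = 1 := by
  rcases zmod2_cases x with h0 | h1
  · subst h0; simp [ZMod.val_zero] at h
  · exact h1

lemma mem_dualNet {m s : ℕ} {C : Fin s → Matrix (Fin m) (Fin m) (ZMod 2)}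
    {mm : Fin s → Fin m → ZMod 2} :
    mm ∈ dualNet m s C ↔ ∀ n : Fin (2 ^ m),
      (∑ i, ∑ j, mm i j * netDig m s C (n : ℕ) i j) = 0 := by
  simp [dualNet]

lemma dual_add {m s : ℕ} {C : Fin s → Matrix (Fin m) (Fin m) (ZMod 2)}
    {x y : Fin s → Fin m → ZMod 2} (hx : x ∈ dualNet m s C) (hy : y ∈ dualNet m s C) :
    x + y ∈ dualNet m s C := by
  rw [mem_dualNet] at *
  intro n
  have : (∑ i, ∑ j, (x + y) i j * netDig m s C (n : ℕ) i j) =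
      (∑ i, ∑ j, x i j * netDig m s C (n : ℕ) i j) +
        ∑ i, ∑ j, y i j * netDig m s C (n : ℕ) i j := by
    rw [← Finset.sum_add_distrib]
    apply Finset.sum_congr rfl
    intro i _
    rw [← Finset.sum_add_distrib]
    apply Finset.sum_congr rfl
    intro j _
    simp [add_mul]
  rw [this, hx n, hy n, add_zero]

lemma dual_zero_of_rho (m s tm : ℕ) (C : Fin s → Matrix (Fin m) (Fin m) (ZMod 2))
    (hnet : IsNet tm m s fun n : Fin (2 ^ m) => netPoint m s C (n : ℕ))
    (d : Fin s → ℕ) (hd : (∑ i, d i) + tm = m) (mm : Fin s → Fin m → ZMod 2)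
    (hmem : mm ∈ dualNet m s C) (hrho : ∀ i, rhoF (mm i) ≤ d i) : mm = 0 := by
  have hdi : ∀ i, d i ≤ m := fun i => by
    have := Finset.single_le_sum (f := d) (fun i _ => Nat.zero_le _) (Finset.mem_univ i)
    omega
  by_contra h0
  obtain ⟨i0, hi0⟩ := Function.ne_iff.mp h0
  obtain ⟨j0, hj0⟩ := Function.ne_iff.mp hi0
  have hj0' : mm i0 j0 ≠ 0 := hj0
  have hj0d : (j0 : ℕ) < d i0 := by
    by_contra hc
    exact hj0' (rhoF_le_apply (hrho i0) (by omega))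
  set k0 : ℕ := d i0 - 1 - (j0 : ℕ) with hk0_def
  set a : Fin s → ℕ := fun i => if i = i0 then 2 ^ k0 else 0 with ha_def
  have ha : ∀ i, a i < 2 ^ d i := by
    intro i
    simp only [ha_def]
    split
    · rename_i h; subst h
      exact Nat.pow_lt_pow_right (by norm_num) (by omega)
    · exact Nat.two_pow_pos _
  have hcard := hnet d a ha hd
  have hpos : 0 < (Finset.univ.filter fun n : Fin (2 ^ m) => ∀ i,
      (a i : ℝ) / 2 ^ d i ≤ netPoint m s C (n : ℕ) i ∧
        netPoint m s C (n : ℕ) i < ((a i : ℝ) + 1) / 2 ^ d i).card := by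
    rw [hcard]; exact Nat.two_pow_pos _
  obtain ⟨n, hn⟩ := Finset.card_pos.mp hpos
  have hbox := (Finset.mem_filter.mp hn).2
  -- digits of the point
  have hdig : ∀ i, ∀ j : Fin m, (j : ℕ) < d i →
      (netDig m s C (n : ℕ) i j).val = a i / 2 ^ (d i - 1 - (j : ℕ)) % 2 := by
    intro i
    have hbi := hbox i
    exact digit_extract (hdi i) (fun j => (netDig m s C (n : ℕ) i j).val)
      (fun j => Nat.lt_succ_iff.mp (ZMod.val_lt _)) (a i) (ha i) hbi.1 hbi.2
  have hdig0 : ∀ i, i ≠ i0 → ∀ j : Fin m, (j : ℕ) < d i → netDig m s C (n : ℕ) i j = 0 := by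
    intro i hi j hj
    have hv := hdig i j hj
    simp only [ha_def] at hv
    rw [if_neg hi] at hv
    simp only [Nat.zero_div, Nat.zero_mod] at hv
    exact (ZMod.val_eq_zero _).mp hv
  have hdig1 : ∀ j : Fin m, (j : ℕ) < d i0 →
      netDig m s C (n : ℕ) i0 j = if j = j0 then 1 else 0 := by
    intro j hj
    have hv := hdig i0 j hj
    simp only [ha_def, if_pos] at hv
    by_cases hjj : j = j0
    · subst hjj
      rw [if_pos rfl]
      have hexp : d i0 - 1 - (j : ℕ) = k0 := rfl
      rw [hexp, Nat.div_self (Nat.two_pow_pos _)] at hv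
      exact zmod2_of_val_eq_one hv
    · rw [if_neg hjj]
      set l : ℕ := d i0 - 1 - (j : ℕ) with hl_def
      have hjne : (j : ℕ) ≠ (j0 : ℕ) := fun h => hjj (Fin.ext h)
      have hlk : l ≠ k0 := by omega
      rcases Nat.lt_or_ge k0 l with hlt | hge
      · rw [Nat.div_eq_of_lt (Nat.pow_lt_pow_right (by norm_num) hlt)] at hv
        simp only [Nat.zero_mod] at hv
        exact (ZMod.val_eq_zero _).mp hv
      · have hlt : l < k0 := by omega
        rw [Nat.pow_div (by omega) (by norm_num)] at hv
        have h2 : (2 : ℕ) ^ (k0 - l) = 2 * 2 ^ (k0 - l - 1) := by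
          rw [← pow_succ']
          congr 1
          omega
        rw [h2, Nat.mul_mod_right] at hv
        exact (ZMod.val_eq_zero _).mp hv
  have heq := mem_dualNet.mp hmem n
  have hsum : (∑ i, ∑ j, mm i j * netDig m s C (n : ℕ) i j) = mm i0 j0 := by
    rw [Finset.sum_eq_single i0]
    · rw [Finset.sum_eq_single j0]
      · rw [hdig1 j0 hj0d, if_pos rfl, mul_one]
      · intro j _ hj
        by_cases hjd : (j : ℕ) < d i0
        · rw [hdig1 j hjd, if_neg hj, mul_zero]
        · rw [rhoF_le_apply (hrho i0) (by omega), zero_mul]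
      · intro h; exact absurd (Finset.mem_univ j0) h
    · intro i _ hi
      apply Finset.sum_eq_zero
      intro j _
      by_cases hjd : (j : ℕ) < d i
      · rw [hdig0 i hi j hjd, mul_zero]
      · rw [rhoF_le_apply (hrho i) (by omega), zero_mul]
    · intro h; exact absurd (Finset.mem_univ i0) h
  rw [hsum] at heq
  exact hj0' heq

lemma exists_between_aux {s : ℕ} (g : Fin s → ℕ) (N : ℕ) :
    ∀ k (f : Fin s → ℕ), N - (∑ i, f i) = k → (∀ i, f i ≤ g i) → (∑ i, f i) ≤ N →
      N ≤ ∑ i, g i →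
      ∃ h : Fin s → ℕ, (∀ i, f i ≤ h i ∧ h i ≤ g i) ∧ (∑ i, h i) = N := by
  intro k
  induction k with
  | zero =>
    intro f hk hfg h1 _
    exact ⟨f, fun i => ⟨le_refl _, hfg i⟩, by omega⟩
  | succ k ih =>
    intro f hk hfg h1 h2
    have hlt : (∑ i, f i) < N := by omega
    have hne : ∃ i, f i < g i := by
      by_contra hc
      push_neg at hc
      have : (∑ i, g i) ≤ ∑ i, f i := Finset.sum_le_sum fun i _ => hc i
      omega
    obtain ⟨i0, hi0⟩ := hne
    set f' := Function.update f i0 (f i0 + 1) with hf'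
    have hsum' : (∑ i, f' i) = (∑ i, f i) + 1 := by
      rw [hf', Finset.sum_update_of_mem (Finset.mem_univ i0),
        Finset.sdiff_singleton_eq_erase]
      have he1 : (∑ i ∈ Finset.univ.erase i0, f i) + f i0 = ∑ i, f i :=
        Finset.sum_erase_add _ _ (Finset.mem_univ i0)
      omega
    obtain ⟨h, hh1, hh2⟩ := ih f' (by omega)
      (fun i => by
        rw [hf', Function.update_apply]
        split
        · rename_i hii; subst hii
          simp only [hf'] at *
          omega
        · exact hfg i)
      (by omega) h2
    refine ⟨h, fun i => ⟨?_, (hh1 i).2⟩, hh2⟩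
    have hle := (hh1 i).1
    rw [hf', Function.update_apply] at hle
    by_cases hii : i = i0
    · subst hii; simp at hle; omega
    · rwa [if_neg hii] at hle

lemma exists_between_sum {s : ℕ} (f g : Fin s → ℕ) (hfg : ∀ i, f i ≤ g i) (N : ℕ)
    (h1 : (∑ i, f i) ≤ N) (h2 : N ≤ ∑ i, g i) :
    ∃ h : Fin s → ℕ, (∀ i, f i ≤ h i ∧ h i ≤ g i) ∧ (∑ i, h i) = N :=
  exists_between_aux g N _ f rfl hfg h1 h2

lemma zmod2_add_eq_zero : ∀ a b : ZMod 2, a + b = 0 → a = b := by decide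

lemma card_filter_window (m : ℕ) (lo hi : ℕ) (hhi : hi ≤ m) :
    (Finset.univ.filter fun j : Fin m => lo ≤ (j : ℕ) ∧ (j : ℕ) < hi).card = hi - lo := by
  classical
  rw [Finset.card_filter]
  rw [Fin.sum_univ_eq_sum_range (fun j : ℕ => if lo ≤ j ∧ j < hi then 1 else 0)]
  rw [← Finset.card_filter]
  have hset : Finset.filter (fun j => lo ≤ j ∧ j < hi) (Finset.range m) = Finset.Ico lo hi := by
    ext x
    simp only [Finset.mem_filter, Finset.mem_range, Finset.mem_Ico]
    omega
  rw [hset, Nat.card_Ico]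

lemma card_dual_bound (m s : ℕ) (C : Fin s → Matrix (Fin m) (Fin m) (ZMod 2))
    (A A' : Fin s → ℕ) (hAm : ∀ i, A i ≤ m) (hA' : ∀ i, A' i ≤ A i)
    (Hz : ∀ mm ∈ dualNet m s C, (∀ i, rhoF (mm i) ≤ A' i) → mm = 0) :
    ((dualNet m s C).filter fun mm => mm ≠ 0 ∧ ∀ i, rhoF (mm i) ≤ A i).card ≤
      2 ^ (∑ i, (A i - A' i)) := by
  classical
  set S := (dualNet m s C).filter fun mm => mm ≠ 0 ∧ ∀ i, rhoF (mm i) ≤ A i with hS_def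
  set F : Finset (Fin s → Fin m → ZMod 2) := Fintype.piFinset fun i =>
    Fintype.piFinset fun j : Fin m =>
      if A' i ≤ (j : ℕ) ∧ (j : ℕ) < A i then (Finset.univ : Finset (ZMod 2)) else {0}
    with hF_def
  set r : (Fin s → Fin m → ZMod 2) → (Fin s → Fin m → ZMod 2) := fun mm i j =>
    if A' i ≤ (j : ℕ) ∧ (j : ℕ) < A i then mm i j else 0 with hr_def
  have hmap : ∀ mm ∈ S, r mm ∈ F := by
    intro mm _
    simp only [hF_def, Fintype.mem_piFinset]
    intro i j
    simp only [hr_def]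
    split
    · exact Finset.mem_univ _
    · exact Finset.mem_singleton_self 0
  have hinj : Set.InjOn r S := by
    intro x hx y hy hxy
    simp only [hS_def, Finset.mem_coe, Finset.mem_filter] at hx hy
    have hout : ∀ i (j : Fin m), A' i ≤ (j : ℕ) → x i j = y i j := by
      intro i j hj
      by_cases hjA : (j : ℕ) < A i
      · have := congrFun (congrFun hxy i) j
        simp only [hr_def, if_pos (And.intro hj hjA)] at this
        exact this
      · rw [rhoF_le_apply (hx.2.2 i) (by omega), rhoF_le_apply (hy.2.2 i) (by omega)]
    have hsum_mem : x + y ∈ dualNet m s C := dual_add hx.1 hy.1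
    have hrho : ∀ i, rhoF ((x + y) i) ≤ A' i := by
      intro i
      apply rhoF_le_of
      intro j hj
      have h := hout i j hj
      show x i j + y i j = 0
      rw [h]
      have : ∀ a : ZMod 2, a + a = 0 := by decide
      exact this _
    have hzero := Hz _ hsum_mem hrho
    funext i j
    exact zmod2_add_eq_zero _ _ (congrFun (congrFun hzero i) j)
  have hcard := Finset.card_le_card_of_injOn r hmap hinj
  have hFcard : F.card = 2 ^ (∑ i, (A i - A' i)) := by
    rw [hF_def, Fintype.card_piFinset]
    have : ∀ i : Fin s, (Fintype.piFinset fun j : Fin m =>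
        if A' i ≤ (j : ℕ) ∧ (j : ℕ) < A i then (Finset.univ : Finset (ZMod 2)) else {0}).card
        = 2 ^ (A i - A' i) := by
      intro i
      rw [Fintype.card_piFinset]
      have heach : ∀ j : Fin m, (if A' i ≤ (j : ℕ) ∧ (j : ℕ) < A i
          then (Finset.univ : Finset (ZMod 2)) else {0}).card =
          if A' i ≤ (j : ℕ) ∧ (j : ℕ) < A i then 2 else 1 := by
        intro j
        split
        · simp [Finset.card_univ]
        · simp
      rw [Finset.prod_congr rfl fun j _ => heach j]
      rw [Finset.prod_ite (fun _ => (2 : ℕ)) (fun _ => (1 : ℕ)), Finset.prod_const,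
        Finset.prod_const, one_pow, mul_one, card_filter_window m (A' i) (A i) (hAm i)]
    rw [Finset.prod_congr rfl fun i _ => this i, Finset.prod_pow_eq_pow_sum]
  rw [← hFcard]
  exact hcard

lemma abs_lamF_le (m s : ℕ) (C : Fin s → Matrix (Fin m) (Fin m) (ZMod 2)) (A : Fin s → ℕ)
    (t y : Fin s → Fin m → Fin 2) :
    |LamF m s C A t y| ≤
      (((dualNet m s C).filter fun mm => mm ≠ 0 ∧ ∀ i, rhoF (mm i) ≤ A i).card : ℝ) := by
  unfold LamF
  refine (Finset.abs_sum_le_sum_abs _ _).trans ?_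
  have : ∀ mm ∈ (dualNet m s C).filter fun mm => mm ≠ 0 ∧ ∀ i, rhoF (mm i) ≤ A i,
      |(-1 : ℝ) ^ (∑ i, ((∑ j, (mm i j).val * ((t i j : ℕ) + (y i j : ℕ))) + mAt (mm i) (A i)))|
        = 1 := by
    intro mm _
    rw [abs_pow, abs_neg, abs_one, one_pow]
  rw [Finset.sum_congr rfl this, Finset.sum_const, nsmul_eq_mul, mul_one]

lemma int_le1 (a m tm : ℤ) (h : m ≤ tm) : a ≤ a - m + tm + 1 := by omega

lemma int_le2 (a m tm : ℕ) (h1 : m - tm ≤ a) (h2 : tm ≤ m) :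
    ((a - (m - tm) : ℕ) : ℤ) ≤ (a : ℤ) - (m : ℤ) + (tm : ℤ) + 1 := by omega

lemma int_le3 (tm s : ℤ) (hs : 0 ≤ s) : tm + 1 - s ≤ tm + 1 := by omega

lemma sub_le_smul' (s m tm : ℕ) (hs : 1 ≤ s) : m - tm ≤ s * m := by
  have := Nat.le_mul_of_pos_left m hs
  omega

end Aux7

/-- `|Λ_A(T ⊕ Y^{(m)})| ≤ 2^{a₀(A)-m+t_m+1}` and
`|Ψ_A| ≤ 2^{t_m+1}`. -/
theorem statement7 (s m tm : ℕ) (hs : 2 ≤ s)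
    (C : Fin s → Matrix (Fin m) (Fin m) (ZMod 2))
    (hnet : IsNet tm m s fun n : Fin (2 ^ m) => netPoint m s C (n : ℕ))
    (A : Fin s → ℕ) (hA : ∀ i, A i ≤ m) (T Y : Fin s → ℝ)
    (hT : ∀ i, ∃ c : ℕ, c < 2 ^ m ∧ T i = (c : ℝ) / 2 ^ m)
    (hY : ∀ i, Y i ∈ Set.Ico (0 : ℝ) 1) :
    |LamF m s C A (digitsOf m s T) (digitsOf m s Y)| ≤
        (2 : ℝ) ^ ((a0F A : ℤ) - (m : ℤ) + (tm : ℤ) + 1) ∧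
      |PsiF m s C A (digitsOf m s T) (digitsOf m s Y)| ≤ (2 : ℝ) ^ (tm + 1) := by
  classical
  have two_pow_cast : ∀ k : ℕ, ((2 ^ k : ℕ) : ℝ) = (2 : ℝ) ^ (k : ℤ) := by
    intro k
    rw [zpow_natCast]
    push_cast
    ring
  have habs := abs_lamF_le m s C A (digitsOf m s T) (digitsOf m s Y)
  have hLam : |LamF m s C A (digitsOf m s T) (digitsOf m s Y)| ≤
      (2 : ℝ) ^ ((a0F A : ℤ) - (m : ℤ) + (tm : ℤ) + 1) := by
    rcases le_or_gt m tm with htm | htm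
    · have Hz : ∀ mm ∈ dualNet m s C, (∀ i, rhoF (mm i) ≤ (fun _ : Fin s => 0) i) → mm = 0 := by
        intro mm _ h
        funext i j
        exact rhoF_le_apply (h i) (Nat.zero_le _)
      have hc0 := card_dual_bound m s C A (fun _ => 0) hA (fun _ => Nat.zero_le _) Hz
      have hc : (((dualNet m s C).filter fun mm => mm ≠ 0 ∧ ∀ i, rhoF (mm i) ≤ A i).card) ≤
          2 ^ a0F A := by simpa [a0F] using hc0
      calc |LamF m s C A (digitsOf m s T) (digitsOf m s Y)|
          ≤ (((dualNet m s C).filter fun mm => mm ≠ 0 ∧ ∀ i, rhoF (mm i) ≤ A i).card : ℝ) :=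
            habs
        _ ≤ ((2 ^ a0F A : ℕ) : ℝ) := by exact_mod_cast hc
        _ = (2 : ℝ) ^ ((a0F A : ℤ)) := two_pow_cast (a0F A)
        _ ≤ (2 : ℝ) ^ ((a0F A : ℤ) - (m : ℤ) + (tm : ℤ) + 1) := by
              apply zpow_le_zpow_right₀ (by norm_num : (1:ℝ) ≤ 2)
              exact int_le1 _ _ _ (by exact_mod_cast htm)
    · rcases le_or_gt (m - tm) (a0F A) with ha0 | ha0
      · obtain ⟨A', hA'b, hA'sum⟩ := exists_between_sum (fun _ : Fin s => 0) A
          (fun _ => Nat.zero_le _) (m - tm) (by simp) (by simpa [a0F] using ha0)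
        have Hz : ∀ mm ∈ dualNet m s C, (∀ i, rhoF (mm i) ≤ A' i) → mm = 0 := by
          intro mm hmm h
          exact dual_zero_of_rho m s tm C hnet A' (by rw [hA'sum]; exact Nat.sub_add_cancel htm.le) mm hmm h
        have hc := card_dual_bound m s C A A' hA (fun i => (hA'b i).2) Hz
        have hsub : (∑ i, (A i - A' i)) = a0F A - (m - tm) := by
          rw [Finset.sum_tsub_distrib _ (fun i _ => (hA'b i).2), hA'sum]
          rfl
        rw [hsub] at hc
        calc |LamF m s C A (digitsOf m s T) (digitsOf m s Y)|
            ≤ (((dualNet m s C).filter fun mm => mm ≠ 0 ∧ ∀ i, rhoF (mm i) ≤ A i).card : ℝ) :=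
              habs
          _ ≤ ((2 ^ (a0F A - (m - tm)) : ℕ) : ℝ) := by exact_mod_cast hc
          _ = (2 : ℝ) ^ (((a0F A - (m - tm) : ℕ)) : ℤ) := two_pow_cast (a0F A - (m - tm))
          _ ≤ (2 : ℝ) ^ ((a0F A : ℤ) - (m : ℤ) + (tm : ℤ) + 1) := by
              apply zpow_le_zpow_right₀ (by norm_num : (1:ℝ) ≤ 2)
              exact int_le2 _ _ _ ha0 htm.le
      · obtain ⟨A'', hA''b, hA''sum⟩ := exists_between_sum A (fun _ : Fin s => m) hA (m - tm)
          (le_of_lt (by simpa [a0F] using ha0))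
          (by
            rw [Finset.sum_const, smul_eq_mul, Finset.card_univ, Fintype.card_fin]
            exact sub_le_smul' s m tm (by omega))
        have hempty : ((dualNet m s C).filter fun mm => mm ≠ 0 ∧ ∀ i, rhoF (mm i) ≤ A i) = ∅ := by
          apply Finset.eq_empty_of_forall_notMem
          intro mm hmm
          obtain ⟨h1, h2, h3⟩ := Finset.mem_filter.mp hmm
          exact h2 (dual_zero_of_rho m s tm C hnet A'' (by rw [hA''sum]; exact Nat.sub_add_cancel htm.le) mm h1
            fun i => le_trans (h3 i) (hA''b i).1)
        calc |LamF m s C A (digitsOf m s T) (digitsOf m s Y)|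
            ≤ (((dualNet m s C).filter fun mm => mm ≠ 0 ∧ ∀ i, rhoF (mm i) ≤ A i).card : ℝ) :=
              habs
          _ = 0 := by rw [hempty]; simp
          _ ≤ (2 : ℝ) ^ ((a0F A : ℤ) - (m : ℤ) + (tm : ℤ) + 1) :=
              le_of_lt (zpow_pos (by norm_num) _)
  refine ⟨hLam, ?_⟩
  unfold PsiF
  rw [abs_mul, abs_mul, abs_mul]
  have h1 : |(-1 : ℝ) ^ kapF A| = 1 := by rw [abs_pow, abs_neg, abs_one, one_pow]
  have h2 : |(2 : ℝ) ^ ((m : ℤ) - (s : ℤ) - (a0F A : ℤ))| =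
      (2 : ℝ) ^ ((m : ℤ) - (s : ℤ) - (a0F A : ℤ)) :=
    abs_of_pos (zpow_pos (by norm_num) _)
  have h3 : |rademF A (digitsOf m s Y)| = 1 := by
    unfold rademF
    rw [Finset.abs_prod]
    rw [Finset.prod_congr rfl fun i _ => by rw [abs_pow, abs_neg, abs_one, one_pow]]
    simp
  rw [h1, h2, h3, one_mul, mul_one]
  have hmul := mul_le_mul_of_nonneg_left hLam
    (le_of_lt (zpow_pos (by norm_num : (0 : ℝ) < 2) ((m : ℤ) - (s : ℤ) - (a0F A : ℤ))))
  refine hmul.trans ?_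
  rw [← zpow_add₀ (by norm_num : (2 : ℝ) ≠ 0)]
  have hexp : ((m : ℤ) - (s : ℤ) - (a0F A : ℤ)) + ((a0F A : ℤ) - (m : ℤ) + (tm : ℤ) + 1) =
      ((tm : ℤ) + 1) - (s : ℤ) := by ring
  rw [hexp]
  calc (2 : ℝ) ^ (((tm : ℤ) + 1) - (s : ℤ)) ≤ (2 : ℝ) ^ ((tm : ℤ) + 1) :=
        by
              apply zpow_le_zpow_right₀ (by norm_num : (1:ℝ) ≤ 2)
              omega
    _ = (2 : ℝ) ^ (tm + 1) := by
        rw [show ((tm : ℤ) + 1) = ((tm + 1 : ℕ) : ℤ) by push_cast; ring, zpow_natCast]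
end
end

section
/- Let P_m be a dyadic digital (t_m, m, s)-net in base 2 and let R(T,Y) = ∑_{A ∈ I_{m,s,m+1}} Ψ_A be the tail of the Walsh decomposition of the discrepancy. Then E^{(m)}_{Y,T}(R(T,Y)²) ≤ 2^{t_m + 1 − V_0} (m+1)^s, where V_0 = 10 log₂ m; in particular, E^{(m)}_{Y,T}(R²) = O(m^{s − 9.9}) when t_m ≤ (1/10)·log₂ m. -/
open MeasureTheory Filter

noncomputable section

attribute [local instance] Classical.propDecidable

lemma zmod2_em : ∀ x : ZMod 2, x = 0 ∨ x = 1 := by decide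

lemma neg_one_pow_mod (a : ℕ) : (-1:ℝ)^a = (-1:ℝ)^(a % 2) := by
  conv_lhs => rw [← Nat.div_add_mod a 2]
  rw [pow_add, pow_mul]
  norm_num

lemma neg_one_pow_par {a b : ℕ} (h : a % 2 = b % 2) : (-1:ℝ)^a = (-1:ℝ)^b := by
  rw [neg_one_pow_mod a, neg_one_pow_mod b, h]

lemma parity_sum {ι : Type*} (s : Finset ι) (f g : ι → ℕ)
    (h : ∀ i ∈ s, f i % 2 = g i % 2) : (∑ i ∈ s, f i) % 2 = (∑ i ∈ s, g i) % 2 := by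
  rw [Finset.sum_nat_mod s 2 f, Finset.sum_nat_mod s 2 g, Finset.sum_congr rfl h]

lemma val_add_par : ∀ v w : ZMod 2, (v+w).val % 2 = (v.val + w.val) % 2 := by decide

lemma val_mul : ∀ v w : ZMod 2, (v*w).val = v.val * w.val := by decide

lemma val4 : ∀ p q v w : ZMod 2,
    (p+q+v+w).val % 2 = (p.val + q.val + v.val + w.val) % 2 := by decide

lemma mul_par {x x' : ℕ} (t : ℕ) (h : x % 2 = x' % 2) : (x * t) % 2 = (x' * t) % 2 := by
  rw [Nat.mul_mod, h, ← Nat.mul_mod]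

lemma val_sum_par {ι : Type*} (s : Finset ι) (f : ι → ZMod 2) :
    (∑ i ∈ s, f i).val % 2 = (∑ i ∈ s, (f i).val) % 2 := by
  induction s using Finset.cons_induction with
  | empty => simp
  | cons a s ha ih =>
    rw [Finset.sum_cons, Finset.sum_cons, val_add_par, Nat.add_mod, ih, ← Nat.add_mod]

lemma sum_prod_pi {ι : Type*} [Fintype ι] [DecidableEq ι] {κ : Type*} [Fintype κ]
    (g : ι → κ → ℝ) : ∑ t : ι → κ, ∏ i, g i (t i) = ∏ i, ∑ v : κ, g i v := by
  rw [Finset.prod_univ_sum (fun _ => Finset.univ) g, Fintype.piFinset_univ]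

lemma sum_fin2 (c : ZMod 2) :
    ∑ v : Fin 2, (-1:ℝ)^(c.val * (v:ℕ)) = if c = 0 then 2 else 0 := by
  rw [Fin.sum_univ_two]
  rcases zmod2_em c with h | h <;> subst h <;> norm_num [ZMod.val_one]

lemma prodIteZero {ι : Type*} [Fintype ι] (P : ι → Prop) [DecidablePred P] (c : ℝ) :
    (∏ i, if P i then c else 0) = if (∀ i, P i) then c ^ (Fintype.card ι) else 0 := by
  by_cases h : ∀ i, P i
  · rw [if_pos h, Finset.prod_congr rfl fun i (_ : i ∈ Finset.univ) => if_pos (h i),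
      Finset.prod_const, Finset.card_univ]
  · rw [if_neg h]
    push_neg at h
    obtain ⟨i, hi⟩ := h
    exact Finset.prod_eq_zero (Finset.mem_univ i) (if_neg hi)

lemma charSum_free (m : ℕ) (b : Fin m → ZMod 2) :
    ∑ u : Fin m → Fin 2, (-1:ℝ)^(∑ j, (b j).val * (u j : ℕ))
      = if b = 0 then (2:ℝ)^m else 0 := by
  have h1 : ∀ u : Fin m → Fin 2, (-1:ℝ)^(∑ j, (b j).val * (u j : ℕ))
      = ∏ j, (-1:ℝ)^((b j).val * (u j : ℕ)) := fun u =>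
    (Finset.prod_pow_eq_pow_sum _ _ _).symm
  rw [Finset.sum_congr rfl fun u _ => h1 u,
    sum_prod_pi (fun j (v : Fin 2) => (-1:ℝ)^((b j).val * (v:ℕ))),
    Finset.prod_congr rfl fun j _ => sum_fin2 (b j), prodIteZero]
  simp [funext_iff]

lemma charSum2 (s m : ℕ) (b : Fin s → Fin m → ZMod 2) :
    ∑ t : Fin s → Fin m → Fin 2, (-1:ℝ)^(∑ i, ∑ j, (b i j).val * (t i j : ℕ))
      = if b = 0 then (2:ℝ)^(s*m) else 0 := by
  have h1 : ∀ t : Fin s → Fin m → Fin 2, (-1:ℝ)^(∑ i, ∑ j, (b i j).val * (t i j : ℕ))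
      = ∏ i, (-1:ℝ)^(∑ j, (b i j).val * (t i j : ℕ)) := fun t =>
    (Finset.prod_pow_eq_pow_sum _ _ _).symm
  rw [Finset.sum_congr rfl fun t _ => h1 t,
    sum_prod_pi (fun i (u : Fin m → Fin 2) => (-1:ℝ)^(∑ j, (b i j).val * (u j : ℕ))),
    Finset.prod_congr rfl fun i _ => charSum_free m (b i), prodIteZero]
  rw [← pow_mul]
  simp only [Fintype.card_fin, Nat.mul_comm m s]
  simp [funext_iff]

/-! ### XOR character sums over `Fin (2^m)` -/

def finXor {m : ℕ} (a b : Fin (2^m)) : Fin (2^m) :=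
  ⟨(a : ℕ) ^^^ (b : ℕ), Nat.xor_lt_two_pow a.isLt b.isLt⟩

lemma finXor_invol {m : ℕ} (b : Fin (2^m)) : Function.Involutive (fun a => finXor a b) := by
  intro a
  simp [finXor, Nat.xor_xor_cancel_right]

lemma neg_one_val_succ : ∀ x : ZMod 2, (-1:ℝ)^((x+1).val) = -((-1:ℝ)^x.val) := by
  intro x
  rcases zmod2_em x with h | h <;> subst h
  · have h2 : ((0:ZMod 2)+1) = 1 := by decide
    rw [h2, ZMod.val_one, ZMod.val_zero]; norm_num
  · have h2 : ((1:ZMod 2)+1) = 0 := by decide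
    rw [h2, ZMod.val_one, ZMod.val_zero]; norm_num

lemma charSumFin (m : ℕ) (F : Fin (2^m) → ZMod 2)
    (hF : ∀ a b : Fin (2^m), F (finXor a b) = F a + F b) :
    ∑ n : Fin (2^m), (-1:ℝ)^(F n).val = if ∀ n, F n = 0 then (2:ℝ)^m else 0 := by
  by_cases h : ∀ n, F n = 0
  · rw [if_pos h]
    rw [Finset.sum_congr rfl fun n _ => by rw [h n]]
    simp [Finset.card_univ]
  · rw [if_neg h]
    push_neg at h
    obtain ⟨n₀, hn₀⟩ := h
    have hF1 : F n₀ = 1 := by rcases zmod2_em (F n₀) with h' | h'; · exact absurd h' hn₀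
                              · exact h'
    have key : ∑ n : Fin (2^m), (-1:ℝ)^(F n).val
        = ∑ n : Fin (2^m), (-1:ℝ)^(F (finXor n n₀)).val := by
      exact (Fintype.sum_bijective _ (finXor_invol n₀).bijective _ _ fun n => rfl).symm
    have key2 : ∑ n : Fin (2^m), (-1:ℝ)^(F (finXor n n₀)).val
        = -∑ n : Fin (2^m), (-1:ℝ)^(F n).val := by
      rw [← Finset.sum_neg_distrib]
      refine Finset.sum_congr rfl fun n _ => ?_
      rw [hF n n₀, hF1, neg_one_val_succ]
    have := key.trans key2
    linarith

lemma netDig_xor {m s : ℕ} (C : Fin s → Matrix (Fin m) (Fin m) (ZMod 2))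
    (a b : Fin (2^m)) (i : Fin s) (j : Fin m) :
    netDig m s C ((finXor a b : Fin (2^m)) : ℕ) i j
      = netDig m s C (a : ℕ) i j + netDig m s C (b : ℕ) i j := by
  unfold netDig
  rw [← Finset.sum_add_distrib]
  refine Finset.sum_congr rfl fun r _ => ?_
  rw [← mul_add]
  congr 1
  show (if Nat.testBit ((a:ℕ) ^^^ (b:ℕ)) r then (1:ZMod 2) else 0) = _
  rw [Nat.testBit_xor]
  rcases Bool.dichotomy (Nat.testBit (a:ℕ) r) with h1 | h1 <;>
    rcases Bool.dichotomy (Nat.testBit (b:ℕ) r) with h2 | h2 <;>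
      simp [h1, h2] <;> decide

lemma dual_indicator {m s : ℕ} (C : Fin s → Matrix (Fin m) (Fin m) (ZMod 2))
    (mm : Fin s → Fin m → ZMod 2) :
    (if mm ∈ dualNet m s C then (1:ℝ) else 0) * (2:ℝ)^m
      = ∑ n : Fin (2^m),
          (-1:ℝ)^((∑ i, ∑ j, mm i j * netDig m s C (n : ℕ) i j).val) := by
  have hadd : ∀ a b : Fin (2^m),
      (∑ i, ∑ j, mm i j * netDig m s C ((finXor a b : Fin (2^m)) : ℕ) i j)
        = (∑ i, ∑ j, mm i j * netDig m s C (a : ℕ) i j)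
          + (∑ i, ∑ j, mm i j * netDig m s C (b : ℕ) i j) := by
    intro a b
    rw [← Finset.sum_add_distrib]
    refine Finset.sum_congr rfl fun i _ => ?_
    rw [← Finset.sum_add_distrib]
    refine Finset.sum_congr rfl fun j _ => ?_
    rw [netDig_xor, mul_add]
  rw [charSumFin m _ hadd]
  have : mm ∈ dualNet m s C ↔ ∀ n : Fin (2^m),
      (∑ i, ∑ j, mm i j * netDig m s C (n : ℕ) i j) = 0 := by
    simp [dualNet]
  by_cases h : mm ∈ dualNet m s C
  · rw [if_pos h, if_pos (this.mp h), one_mul]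
  · rw [if_neg h, if_neg (fun hh => h (this.mpr hh)), zero_mul]

lemma rho_filter_eq {m : ℕ} (a : ℕ) :
    (Finset.univ.filter fun b : Fin m → ZMod 2 => rhoF b ≤ a)
      = Fintype.piFinset (fun j : Fin m =>
          if (j:ℕ)+1 ≤ a then (Finset.univ : Finset (ZMod 2)) else {0}) := by
  ext b
  simp only [Finset.mem_filter, Finset.mem_univ, true_and, Fintype.mem_piFinset,
    rhoF, Finset.sup_le_iff]
  constructor
  · intro h j
    by_cases hj : (j:ℕ)+1 ≤ a
    · simp [hj]
    · rw [if_neg hj, Finset.mem_singleton]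
      by_contra hbj
      exact hj (h j (by simp [hbj]))
  · intro h j hj
    have hbj : b j ≠ 0 := by simpa using hj
    by_contra hja
    have hj2 := h j
    rw [if_neg hja, Finset.mem_singleton] at hj2
    exact hbj hj2

lemma VA_eq {m s : ℕ} (A : Fin s → ℕ) :
    (Finset.univ.filter fun mm : Fin s → Fin m → ZMod 2 => ∀ i, rhoF (mm i) ≤ A i)
      = Fintype.piFinset (fun i => Finset.univ.filter fun b : Fin m → ZMod 2 => rhoF b ≤ A i) := by
  ext mm
  simp [Fintype.mem_piFinset]

lemma inner_W {m s : ℕ} (A : Fin s → ℕ) (D : Fin s → Fin m → ZMod 2) :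
    ∑ mm ∈ (Finset.univ.filter fun mm : Fin s → Fin m → ZMod 2 => ∀ i, rhoF (mm i) ≤ A i),
      (-1:ℝ)^((∑ i, ∑ j, mm i j * D i j).val)
    = ∏ i : Fin s, ∏ j : Fin m, (if (j:ℕ)+1 ≤ A i then 1 + (-1:ℝ)^((D i j).val) else 1) := by
  have hpar : ∀ mm : Fin s → Fin m → ZMod 2,
      (-1:ℝ)^((∑ i, ∑ j, mm i j * D i j).val)
        = ∏ i, ∏ j, (-1:ℝ)^((mm i j).val * (D i j).val) := by
    intro mm
    have hp : (∑ i, ∑ j, mm i j * D i j).val % 2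
        = (∑ i, ∑ j, (mm i j).val * (D i j).val) % 2 := by
      rw [val_sum_par]
      refine parity_sum _ _ _ fun i _ => ?_
      rw [val_sum_par]
      refine parity_sum _ _ _ fun j _ => ?_
      rw [val_mul]
    rw [neg_one_pow_par hp]
    rw [Finset.prod_congr rfl fun i (_ : i ∈ Finset.univ) =>
      Finset.prod_pow_eq_pow_sum Finset.univ _ _, Finset.prod_pow_eq_pow_sum]
  rw [Finset.sum_congr rfl fun mm _ => hpar mm, VA_eq,
    ← Finset.prod_univ_sum (fun i => Finset.univ.filter fun b : Fin m → ZMod 2 => rhoF b ≤ A i)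
      (fun i b => ∏ j, (-1:ℝ)^((b j).val * (D i j).val))]
  refine Finset.prod_congr rfl fun i _ => ?_
  rw [rho_filter_eq,
    ← Finset.prod_univ_sum (fun j : Fin m => if (j:ℕ)+1 ≤ A i then (Finset.univ : Finset (ZMod 2)) else {0})
      (fun (j : Fin m) (v : ZMod 2) => (-1:ℝ)^(v.val * (D i j).val))]
  refine Finset.prod_congr rfl fun j _ => ?_
  by_cases hj : (j:ℕ)+1 ≤ A i
  · rw [if_pos hj, if_pos hj]
    have hu : (Finset.univ : Finset (ZMod 2)) = {0,1} := by decide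
    rw [hu, Finset.sum_insert (by decide), Finset.sum_singleton, ZMod.val_zero, ZMod.val_one]
    norm_num
  · rw [if_neg hj, if_neg hj, Finset.sum_singleton, ZMod.val_zero]
    norm_num

lemma card_identity {m s : ℕ} (C : Fin s → Matrix (Fin m) (Fin m) (ZMod 2)) (A : Fin s → ℕ) :
    ((((dualNet m s C).filter fun mm => ∀ i, rhoF (mm i) ≤ A i).card : ℝ)) * (2:ℝ)^m
      = ∑ n : Fin (2^m), ∏ i : Fin s, ∏ j : Fin m,
          (if (j:ℕ)+1 ≤ A i then 1 + (-1:ℝ)^((netDig m s C (n:ℕ) i j).val) else 1) := by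
  have h1 : (dualNet m s C).filter (fun mm => ∀ i, rhoF (mm i) ≤ A i)
      = (Finset.univ.filter fun mm : Fin s → Fin m → ZMod 2 =>
          ∀ i, rhoF (mm i) ≤ A i).filter (fun mm => mm ∈ dualNet m s C) := by
    ext mm
    simp only [dualNet, Finset.mem_filter, Finset.mem_univ, true_and]
    tauto
  rw [h1, Finset.card_filter]
  push_cast
  rw [Finset.sum_mul,
    Finset.sum_congr rfl fun mm _ => dual_indicator C mm,
    Finset.sum_comm]
  exact Finset.sum_congr rfl fun n _ => inner_W A _

lemma exists_d {s : ℕ} (A : Fin s → ℕ) (M : ℕ) (h : M ≤ ∑ i, A i) :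
    ∃ d : Fin s → ℕ, (∀ i, d i ≤ A i) ∧ ∑ i, d i = M := by
  induction M with
  | zero => exact ⟨fun _ => 0, fun i => Nat.zero_le _, by simp⟩
  | succ M ih =>
    obtain ⟨d, hd, hsum⟩ := ih (Nat.le_of_succ_le h)
    have hex : ∃ i, d i < A i := by
      by_contra hc
      push_neg at hc
      have : ∑ i, A i ≤ ∑ i, d i := Finset.sum_le_sum fun i _ => hc i
      omega
    obtain ⟨i0, hi0⟩ := hex
    refine ⟨Function.update d i0 (d i0 + 1), ?_, ?_⟩
    · intro i
      by_cases hii : i = i0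
      · subst hii; rw [Function.update_self]; omega
      · rw [Function.update_of_ne hii]; exact hd i
    · have h2 : ∑ x ∈ Finset.univ.erase i0, d x + d i0 = M := by
        rw [Finset.sum_erase_add _ _ (Finset.mem_univ i0)]; exact hsum
      rw [Finset.sum_update_of_mem (Finset.mem_univ i0), ← Finset.erase_eq]
      omega

lemma geom_ico (d m : ℕ) (h : d ≤ m) :
    ∑ j ∈ Finset.Ico d m, ((1:ℝ)/2^(j+1)) = 1/2^d - 1/2^m := by
  induction m, h using Nat.le_induction with
  | base => simp
  | succ m hm ih => rw [Finset.sum_Ico_succ_top hm, ih, pow_succ]; ring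

lemma netPoint_nonneg {m s : ℕ} (C : Fin s → Matrix (Fin m) (Fin m) (ZMod 2)) (n : ℕ)
    (i : Fin s) : 0 ≤ netPoint m s C n i :=
  Finset.sum_nonneg fun j _ => by positivity

lemma netPoint_lt_iff {m s : ℕ} (C : Fin s → Matrix (Fin m) (Fin m) (ZMod 2)) (n : ℕ)
    (i : Fin s) (dd : ℕ) (hdm : dd ≤ m) :
    netPoint m s C n i < 1/2^dd ↔ ∀ j : Fin m, (j:ℕ) < dd → netDig m s C n i j = 0 := by
  constructor
  · intro hx j hj
    by_contra hne
    have hval : ((netDig m s C n i j).val : ℝ) = 1 := by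
      rcases zmod2_em (netDig m s C n i j) with h | h
      · exact absurd h hne
      · rw [h, ZMod.val_one]; norm_num
    have hterm : ((netDig m s C n i j).val : ℝ)/2^((j:ℕ)+1) ≤ netPoint m s C n i :=
      Finset.single_le_sum (f := fun j' : Fin m =>
        ((netDig m s C n i j').val : ℝ)/2^((j':ℕ)+1)) (fun j' _ => by positivity)
        (Finset.mem_univ j)
    rw [hval] at hterm
    have hpw : (2:ℝ)^((j:ℕ)+1) ≤ 2^dd := pow_le_pow_right₀ (by norm_num) (by omega)
    have : (1:ℝ)/2^dd ≤ 1/2^((j:ℕ)+1) :=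
      one_div_le_one_div_of_le (by positivity) hpw
    linarith
  · intro hz
    set f : ℕ → ℝ := fun j =>
      if h : j < m then ((netDig m s C n i ⟨j, h⟩).val : ℝ)/2^(j+1) else 0 with hf
    have hxf : netPoint m s C n i = ∑ j ∈ Finset.range m, f j := by
      rw [← Fin.sum_univ_eq_sum_range f m]
      refine Finset.sum_congr rfl fun j _ => ?_
      rw [hf]
      simp only [Fin.is_lt, dif_pos, Fin.eta]
    have hsub : ∑ j ∈ Finset.range m, f j = ∑ j ∈ Finset.Ico dd m, f j := by
      refine (Finset.sum_subset ?_ ?_).symm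
      · intro j hj
        rw [Finset.mem_Ico] at hj
        exact Finset.mem_range.mpr hj.2
      · intro j hjr hji
        rw [Finset.mem_range] at hjr
        rw [Finset.mem_Ico, not_and_or] at hji
        have hjd : j < dd := by omega
        rw [hf]
        simp only [hjr, dif_pos]
        rw [hz ⟨j, hjr⟩ hjd, ZMod.val_zero]
        norm_num
    have hle : ∑ j ∈ Finset.Ico dd m, f j ≤ ∑ j ∈ Finset.Ico dd m, (1:ℝ)/2^(j+1) := by
      refine Finset.sum_le_sum fun j hj => ?_
      rw [Finset.mem_Ico] at hj
      rw [hf]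
      simp only [hj.2, dif_pos]
      have : ((netDig m s C n i ⟨j, hj.2⟩).val : ℝ) ≤ 1 := by
        have := ZMod.val_lt (netDig m s C n i ⟨j, hj.2⟩)
        have h1 : (netDig m s C n i ⟨j, hj.2⟩).val ≤ 1 := by omega
        exact_mod_cast h1
      gcongr
    have hgeo := geom_ico dd m hdm
    have hm2 : (0:ℝ) < 1/2^m := by positivity
    rw [hxf, hsub]
    linarith

lemma Kd_card {m s tm : ℕ} (C : Fin s → Matrix (Fin m) (Fin m) (ZMod 2))
    (hnet : IsNet tm m s (fun n : Fin (2^m) => netPoint m s C (n:ℕ)))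
    (d : Fin s → ℕ) (hdm : ∀ i, d i ≤ m) (hsum : ∑ i, d i + tm = m) :
    (Finset.univ.filter fun n : Fin (2^m) =>
        ∀ (i : Fin s) (j : Fin m), (j:ℕ) < d i → netDig m s C (n:ℕ) i j = 0).card
      = 2^tm := by
  have hn := hnet d (fun _ => 0) (fun i => Nat.pow_pos (by norm_num)) hsum
  rw [← hn]
  refine congrArg Finset.card (Finset.filter_congr fun n _ => ?_)
  constructor
  · intro h i
    constructor
    · rw [Nat.cast_zero, zero_div]
      exact netPoint_nonneg C (n:ℕ) i
    · rw [Nat.cast_zero, zero_add]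
      exact (netPoint_lt_iff C (n:ℕ) i (d i) (hdm i)).mpr (h i)
  · intro h i j hj
    have h2 := (h i).2
    have hlt : netPoint m s C (n:ℕ) i < 1/2^(d i) := by
      rw [Nat.cast_zero, zero_add] at h2
      exact h2
    exact (netPoint_lt_iff C (n:ℕ) i (d i) (hdm i)).mp hlt j hj

lemma W_factor_nonneg (k : ℕ) : (0:ℝ) ≤ 1 + (-1)^k := by
  rcases Nat.even_or_odd k with h | h
  · rw [h.neg_one_pow]; norm_num
  · rw [h.neg_one_pow]; norm_num

lemma W_factor_le (k : ℕ) : (1:ℝ) + (-1)^k ≤ 2 := by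
  rcases Nat.even_or_odd k with h | h
  · rw [h.neg_one_pow]; norm_num
  · rw [h.neg_one_pow]; norm_num

lemma W_le {m s : ℕ} (A : Fin s → ℕ) (hA : ∀ i, A i ≤ m) (D : Fin s → Fin m → ZMod 2) :
    ∏ i : Fin s, ∏ j : Fin m, (if (j:ℕ)+1 ≤ A i then 1 + (-1:ℝ)^((D i j).val) else 1)
      ≤ 2^(a0F A) := by
  have step1 : ∏ i : Fin s, ∏ j : Fin m,
      (if (j:ℕ)+1 ≤ A i then 1 + (-1:ℝ)^((D i j).val) else 1)
      ≤ ∏ i : Fin s, ∏ j : Fin m, (if (j:ℕ)+1 ≤ A i then (2:ℝ) else 1) := by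
    refine Finset.prod_le_prod (fun i _ => Finset.prod_nonneg fun j _ => ?_)
      (fun i _ => Finset.prod_le_prod (fun j _ => ?_) (fun j _ => ?_))
    · by_cases hj : (j:ℕ)+1 ≤ A i
      · rw [if_pos hj]; exact W_factor_nonneg _
      · rw [if_neg hj]; norm_num
    · by_cases hj : (j:ℕ)+1 ≤ A i
      · rw [if_pos hj]; exact W_factor_nonneg _
      · rw [if_neg hj]; norm_num
    · by_cases hj : (j:ℕ)+1 ≤ A i
      · rw [if_pos hj, if_pos hj]; exact W_factor_le _
      · rw [if_neg hj, if_neg hj]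
  refine step1.trans (le_of_eq ?_)
  have hcount : ∀ i, (Finset.univ.filter fun j : Fin m => (j:ℕ)+1 ≤ A i).card = A i := by
    intro i
    have h1 : (Finset.univ.filter fun j : Fin m => (j:ℕ)+1 ≤ A i).card
        = ∑ j : Fin m, if (j:ℕ)+1 ≤ A i then 1 else 0 := Finset.card_filter _ _
    have h2 : ∑ j : Fin m, (if (j:ℕ)+1 ≤ A i then (1:ℕ) else 0)
        = ∑ j ∈ Finset.range m, (if j+1 ≤ A i then (1:ℕ) else 0) :=
      Fin.sum_univ_eq_sum_range (fun j => if j+1 ≤ A i then (1:ℕ) else 0) m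
    have h3 : (Finset.range m).filter (fun j => j+1 ≤ A i) = Finset.range (A i) := by
      ext j
      simp only [Finset.mem_filter, Finset.mem_range]
      constructor
      · intro hh; omega
      · intro hh
        have := hA i
        constructor <;> omega
    rw [h1, h2, ← Finset.card_filter, h3, Finset.card_range]
  have hprod : ∀ i, ∏ j : Fin m, (if (j:ℕ)+1 ≤ A i then (2:ℝ) else 1) = 2^(A i) := by
    intro i
    rw [Finset.prod_ite _ _, Finset.prod_const, Finset.prod_const, one_pow, mul_one, hcount i]
  rw [Finset.prod_congr rfl fun i _ => hprod i, Finset.prod_pow_eq_pow_sum]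
  rfl

lemma W_eq_zero {m s : ℕ} (A : Fin s → ℕ) (D : Fin s → Fin m → ZMod 2)
    (i0 : Fin s) (j0 : Fin m) (hj0 : (j0:ℕ)+1 ≤ A i0) (hD : D i0 j0 ≠ 0) :
    ∏ i : Fin s, ∏ j : Fin m, (if (j:ℕ)+1 ≤ A i then 1 + (-1:ℝ)^((D i j).val) else 1) = 0 := by
  refine Finset.prod_eq_zero (Finset.mem_univ i0) ?_
  refine Finset.prod_eq_zero (Finset.mem_univ j0) ?_
  rw [if_pos hj0]
  have : (D i0 j0).val = 1 := by
    rcases zmod2_em (D i0 j0) with h | h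
    · exact absurd h hD
    · rw [h, ZMod.val_one]
  rw [this]
  norm_num

lemma count_bound {m s tm : ℕ} (C : Fin s → Matrix (Fin m) (Fin m) (ZMod 2))
    (hnet : IsNet tm m s (fun n : Fin (2^m) => netPoint m s C (n:ℕ)))
    (A : Fin s → ℕ) (hA : ∀ i, A i ≤ m) (hge : m ≤ tm + a0F A) :
    ((((dualNet m s C).filter fun mm => ∀ i, rhoF (mm i) ≤ A i).card : ℝ))
      ≤ (2:ℝ)^((tm : ℤ) + (a0F A : ℤ) - (m : ℤ)) := by
  have h2m : (0:ℝ) < (2:ℝ)^m := by positivity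
  have key : ((((dualNet m s C).filter fun mm => ∀ i, rhoF (mm i) ≤ A i).card : ℝ))
      * (2:ℝ)^m ≤ (2:ℝ)^tm * (2:ℝ)^(a0F A) := by
    rw [card_identity]
    by_cases htm : m ≤ tm
    · have hb : ∀ n : Fin (2^m), ∏ i : Fin s, ∏ j : Fin m,
          (if (j:ℕ)+1 ≤ A i then 1 + (-1:ℝ)^((netDig m s C (n:ℕ) i j).val) else 1)
            ≤ 2^(a0F A) := fun n => W_le A hA _
      calc ∑ n : Fin (2^m), ∏ i : Fin s, ∏ j : Fin m,
          (if (j:ℕ)+1 ≤ A i then 1 + (-1:ℝ)^((netDig m s C (n:ℕ) i j).val) else 1)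
          ≤ ∑ _n : Fin (2^m), (2:ℝ)^(a0F A) := Finset.sum_le_sum fun n _ => hb n
        _ = (2:ℝ)^m * (2:ℝ)^(a0F A) := by
            rw [Finset.sum_const, Finset.card_univ, Fintype.card_fin, nsmul_eq_mul]
            push_cast
            ring
        _ ≤ (2:ℝ)^tm * (2:ℝ)^(a0F A) := by
            have : (2:ℝ)^m ≤ (2:ℝ)^tm := pow_le_pow_right₀ (by norm_num) htm
            have hp : (0:ℝ) ≤ (2:ℝ)^(a0F A) := by positivity
            exact mul_le_mul_of_nonneg_right this hp
    · push_neg at htm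
      obtain ⟨d, hd, hdsum⟩ := exists_d A (m - tm) (by
        have : a0F A = ∑ i, A i := rfl
        omega)
      have hdm : ∀ i, d i ≤ m := fun i => le_trans (hd i) (hA i)
      have hK := Kd_card C hnet d hdm (by omega)
      set K := Finset.univ.filter fun n : Fin (2^m) =>
        ∀ (i : Fin s) (j : Fin m), (j:ℕ) < d i → netDig m s C (n:ℕ) i j = 0 with hKdef
      calc ∑ n : Fin (2^m), ∏ i : Fin s, ∏ j : Fin m,
          (if (j:ℕ)+1 ≤ A i then 1 + (-1:ℝ)^((netDig m s C (n:ℕ) i j).val) else 1)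
          ≤ ∑ n : Fin (2^m), (if n ∈ K then (2:ℝ)^(a0F A) else 0) := by
            refine Finset.sum_le_sum fun n _ => ?_
            by_cases hn : n ∈ K
            · rw [if_pos hn]
              exact W_le A hA _
            · rw [if_neg hn]
              rw [hKdef, Finset.mem_filter] at hn
              push_neg at hn
              obtain ⟨i0, j0, hj0, hD⟩ := hn (Finset.mem_univ n)
              exact le_of_eq (W_eq_zero A _ i0 j0 (by
                have h1 := hd i0
                have h2 := hA i0
                omega) hD)
        _ = (K.card : ℝ) * (2:ℝ)^(a0F A) := by
            rw [Finset.sum_ite_mem, Finset.univ_inter, Finset.sum_const, nsmul_eq_mul]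
        _ ≤ (2:ℝ)^tm * (2:ℝ)^(a0F A) := by
            rw [hK]
            push_cast
            exact le_refl _
  have hrw : (2:ℝ)^((tm : ℤ) + (a0F A : ℤ) - (m : ℤ))
      = (2:ℝ)^tm * (2:ℝ)^(a0F A) / (2:ℝ)^m := by
    rw [zpow_sub₀ (by norm_num : (2:ℝ) ≠ 0), zpow_add₀ (by norm_num : (2:ℝ) ≠ 0)]
    norm_num [zpow_natCast]
  rw [hrw, le_div_iff₀ h2m]
  exact key

/-! ### Orthogonality of the `Ψ_A` -/

def hamF {m s : ℕ} (mm : Fin s → Fin m → ZMod 2) (u : Fin s → Fin m → Fin 2) : ℕ :=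
  ∑ i, ∑ j, (mm i j).val * (u i j : ℕ)

def sgF {m s : ℕ} (mm : Fin s → Fin m → ZMod 2) (B : Fin s → ℕ) : ℕ :=
  ∑ i, mAt (mm i) (B i)

def indF (m : ℕ) (a : ℕ) : Fin m → ZMod 2 := fun j => if a = (j:ℕ)+1 then 1 else 0

lemma dAt_eq_sum {m : ℕ} (y : Fin m → Fin 2) (a : ℕ) (ha : a ≤ m) :
    dAt y a = ∑ j : Fin m, (indF m a j).val * (y j : ℕ) := by
  rcases Nat.eq_zero_or_pos a with h0 | h1
  · subst h0
    unfold dAt indF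
    rw [dif_neg (by omega)]
    refine (Finset.sum_eq_zero fun j _ => ?_).symm
    rw [if_neg (by omega), ZMod.val_zero, zero_mul]
  · have ham : a - 1 < m := by omega
    have hs : ∑ j : Fin m, (indF m a j).val * (y j : ℕ)
        = (indF m a ⟨a-1,ham⟩).val * ((y ⟨a-1,ham⟩ : ℕ)) := by
      apply Finset.sum_eq_single
      · intro j _ hj
        unfold indF
        rw [if_neg, ZMod.val_zero, zero_mul]
        intro haj
        exact hj (Fin.ext (show (j:ℕ) = a - 1 by omega))
      · intro h
        exact absurd (Finset.mem_univ _) h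
    rw [hs]
    unfold dAt indF
    rw [dif_pos (show 1 ≤ a ∧ a ≤ m from ⟨h1, ha⟩),
      if_pos (show a = a - 1 + 1 by omega), ZMod.val_one, one_mul]
  
lemma ind_inj {m : ℕ} (a a' : ℕ) (ha : a ≤ m) (ha' : a' ≤ m)
    (h : ∀ j : Fin m, indF m a j + indF m a' j = 0) : a = a' := by
  by_contra hne
  unfold indF at h
  rcases Nat.eq_zero_or_pos a with h0 | h1
  · rcases Nat.eq_zero_or_pos a' with h0' | h1'
    · omega
    · have := h ⟨a'-1, by omega⟩
      rw [if_neg (by simp; omega), if_pos (by simp; omega), zero_add] at this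
      exact one_ne_zero this
  · have := h ⟨a-1, by omega⟩
    rw [if_pos (by simp; omega), if_neg (by simp; omega), add_zero] at this
    exact one_ne_zero this

lemma Em_sum {m s : ℕ} {ι : Type*} (F : Finset ι)
    (g : ι → (Fin s → Fin m → Fin 2) → (Fin s → Fin m → Fin 2) → ℝ) :
    Em m s (fun t y => ∑ a ∈ F, g a t y) = ∑ a ∈ F, Em m s (g a) := by
  unfold Em
  rw [← Finset.mul_sum]
  congr 1
  rw [Finset.sum_congr rfl fun t (_ : t ∈ Finset.univ) => Finset.sum_comm]
  exact Finset.sum_comm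

lemma hamSum {m s : ℕ} (mm mm' : Fin s → Fin m → ZMod 2) :
    (∑ t : Fin s → Fin m → Fin 2, (-1:ℝ)^(hamF mm t + hamF mm' t))
      = if mm = mm' then (2:ℝ)^(s*m) else 0 := by
  have hpar : ∀ t : Fin s → Fin m → Fin 2, (hamF mm t + hamF mm' t) % 2
      = (∑ i, ∑ j, ((mm i j + mm' i j).val * (t i j : ℕ))) % 2 := by
    intro t
    unfold hamF
    rw [← Finset.sum_add_distrib,
      Finset.sum_congr rfl fun i (_ : i ∈ Finset.univ) => (Finset.sum_add_distrib).symm]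
    refine parity_sum _ _ _ fun i _ => (parity_sum _ _ _ fun j _ => ?_)
    rw [← add_mul]
    exact (mul_par _ (val_add_par _ _)).symm
  rw [Finset.sum_congr rfl fun t _ => neg_one_pow_par (hpar t),
    charSum2 s m (fun i j => mm i j + mm' i j)]
  have hiff : ((fun i j => mm i j + mm' i j) = (0 : Fin s → Fin m → ZMod 2)) ↔ mm = mm' := by
    constructor
    · intro h
      funext i j
      have h1 := congrFun (congrFun h i) j
      have h2 : ∀ v w : ZMod 2, v + w = 0 → v = w := by decide
      exact h2 _ _ h1
    · intro h
      subst h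
      funext i j
      have h2 : ∀ v : ZMod 2, v + v = 0 := by decide
      exact h2 _
  rw [if_congr hiff rfl rfl]

lemma ySum {m s : ℕ} (A A' : Fin s → ℕ) (hA : ∀ i, A i ≤ m) (hA' : ∀ i, A' i ≤ m)
    (mm mm' : Fin s → Fin m → ZMod 2) :
    (∑ y : Fin s → Fin m → Fin 2,
        (-1:ℝ)^((∑ i, dAt (y i) (A i)) + (∑ i, dAt (y i) (A' i)) + hamF mm y + hamF mm' y))
      = if (∀ i j, indF m (A i) j + indF m (A' i) j + mm i j + mm' i j = 0)
          then (2:ℝ)^(s*m) else 0 := by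
  have hpar : ∀ y : Fin s → Fin m → Fin 2,
      ((∑ i, dAt (y i) (A i)) + (∑ i, dAt (y i) (A' i)) + hamF mm y + hamF mm' y) % 2
      = (∑ i, ∑ j, ((indF m (A i) j + indF m (A' i) j + mm i j + mm' i j).val * (y i j : ℕ))) % 2 := by
    intro y
    unfold hamF
    rw [Finset.sum_congr rfl fun i (_ : i ∈ Finset.univ) => dAt_eq_sum (y i) (A i) (hA i),
      Finset.sum_congr rfl fun i (_ : i ∈ Finset.univ) => dAt_eq_sum (y i) (A' i) (hA' i),
      ← Finset.sum_add_distrib, ← Finset.sum_add_distrib, ← Finset.sum_add_distrib,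
      Finset.sum_congr rfl fun i (_ : i ∈ Finset.univ) =>
        (by rw [← Finset.sum_add_distrib, ← Finset.sum_add_distrib, ← Finset.sum_add_distrib] :
          (∑ j, (indF m (A i) j).val * (y i j : ℕ)) + (∑ j, (indF m (A' i) j).val * (y i j : ℕ))
            + (∑ j, (mm i j).val * (y i j : ℕ)) + (∑ j, (mm' i j).val * (y i j : ℕ))
          = ∑ j, ((indF m (A i) j).val * (y i j : ℕ) + (indF m (A' i) j).val * (y i j : ℕ)
              + (mm i j).val * (y i j : ℕ) + (mm' i j).val * (y i j : ℕ)))]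
    refine parity_sum _ _ _ fun i _ => (parity_sum _ _ _ fun j _ => ?_)
    rw [← add_mul, ← add_mul, ← add_mul]
    exact (mul_par _ (val4 _ _ _ _)).symm
  rw [Finset.sum_congr rfl fun y _ => neg_one_pow_par (hpar y),
    charSum2 s m (fun i j => indF m (A i) j + indF m (A' i) j + mm i j + mm' i j)]
  refine if_congr ?_ rfl rfl
  rw [funext_iff]
  constructor
  · intro h i j
    have := h i
    rw [funext_iff] at this
    exact this j
  · intro h i
    funext j
    exact h i j

lemma swap24 {α β γ δ : Type*} (s1 : Finset α) (s2 : Finset β) (s3 : Finset γ) (s4 : Finset δ)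
    (F : α → β → γ → δ → ℝ) :
    ∑ t ∈ s1, ∑ y ∈ s2, ∑ a ∈ s3, ∑ b ∈ s4, F t y a b
      = ∑ a ∈ s3, ∑ b ∈ s4, ∑ t ∈ s1, ∑ y ∈ s2, F t y a b := by
  rw [Finset.sum_congr rfl fun t (_ : t ∈ s1) => Finset.sum_comm,
    Finset.sum_congr rfl fun t (_ : t ∈ s1) =>
      Finset.sum_congr rfl fun a (_ : a ∈ s3) => Finset.sum_comm,
    Finset.sum_comm]
  exact Finset.sum_congr rfl fun a _ => Finset.sum_comm

lemma sum_sep {α β : Type*} (s1 : Finset α) (s2 : Finset β) (c : ℝ) (X : α → ℝ) (Y : β → ℝ) :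
    ∑ t ∈ s1, ∑ y ∈ s2, c * (X t * Y y) = c * ((∑ t ∈ s1, X t) * (∑ y ∈ s2, Y y)) := by
  rw [Finset.sum_mul_sum, Finset.mul_sum]
  refine Finset.sum_congr rfl fun t _ => ?_
  rw [Finset.mul_sum]

lemma psi_Em {m s : ℕ} (C : Fin s → Matrix (Fin m) (Fin m) (ZMod 2)) (A A' : Fin s → ℕ)
    (hA : ∀ i, A i ≤ m) (hA' : ∀ i, A' i ≤ m) :
    Em m s (fun t y => PsiF m s C A t y * PsiF m s C A' t y)
      = if A' = A then (2:ℝ)^(2*((m:ℤ) - (s:ℤ) - (a0F A : ℤ)))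
          * (((dualNet m s C).filter fun mm => mm ≠ 0 ∧ ∀ i, rhoF (mm i) ≤ A i).card : ℝ)
        else 0 := by
  have hLam : ∀ (B : Fin s → ℕ) (t y : Fin s → Fin m → Fin 2) (mm : Fin s → Fin m → ZMod 2),
      (-1:ℝ)^(∑ i, ((∑ j, (mm i j).val * ((t i j : ℕ) + (y i j : ℕ))) + mAt (mm i) (B i)))
        = (-1:ℝ)^(hamF mm t) * (-1:ℝ)^(hamF mm y) * (-1:ℝ)^(sgF mm B) := by
    intro B t y mm
    rw [← pow_add, ← pow_add]
    congr 1
    unfold hamF sgF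
    simp only [mul_add, Finset.sum_add_distrib]
  have hrad : ∀ (B : Fin s → ℕ) (y : Fin s → Fin m → Fin 2),
      rademF B y = (-1:ℝ)^(∑ i, dAt (y i) (B i)) :=
    fun B y => Finset.prod_pow_eq_pow_sum _ _ _
  have h1 : ∀ t y : Fin s → Fin m → Fin 2,
      PsiF m s C A t y * PsiF m s C A' t y
        = ((-1:ℝ)^(kapF A) * (2:ℝ)^((m:ℤ)-(s:ℤ)-(a0F A:ℤ))
            * ((-1:ℝ)^(kapF A') * (2:ℝ)^((m:ℤ)-(s:ℤ)-(a0F A':ℤ)))) *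
          ∑ mm ∈ (dualNet m s C).filter (fun mm => mm ≠ 0 ∧ ∀ i, rhoF (mm i) ≤ A i),
          ∑ mm' ∈ (dualNet m s C).filter (fun mm => mm ≠ 0 ∧ ∀ i, rhoF (mm i) ≤ A' i),
            (((-1:ℝ)^(sgF mm A) * (-1:ℝ)^(sgF mm' A')) *
              ((-1:ℝ)^(hamF mm t + hamF mm' t) *
               (-1:ℝ)^((∑ i, dAt (y i) (A i)) + (∑ i, dAt (y i) (A' i))
                  + hamF mm y + hamF mm' y))) := by
    intro t y
    have e1 : PsiF m s C A t y * PsiF m s C A' t y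
        = ((-1:ℝ)^(kapF A) * (2:ℝ)^((m:ℤ)-(s:ℤ)-(a0F A:ℤ))
            * ((-1:ℝ)^(kapF A') * (2:ℝ)^((m:ℤ)-(s:ℤ)-(a0F A':ℤ)))) *
          ((rademF A y * rademF A' y) * (LamF m s C A t y * LamF m s C A' t y)) := by
      unfold PsiF
      ring
    rw [e1]
    congr 1
    unfold LamF
    rw [Finset.sum_mul_sum, Finset.mul_sum]
    refine Finset.sum_congr rfl fun mm hmm => ?_
    rw [Finset.mul_sum]
    refine Finset.sum_congr rfl fun mm' hmm' => ?_
    rw [hLam A t y mm, hLam A' t y mm', hrad A y, hrad A' y]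
    simp only [pow_add]
    ring
  unfold Em
  rw [Finset.sum_congr rfl fun t (_ : t ∈ Finset.univ) =>
      Finset.sum_congr rfl fun y (_ : y ∈ Finset.univ) => h1 t y,
    Finset.sum_congr rfl fun t (_ : t ∈ Finset.univ) => (Finset.mul_sum _ _ _).symm,
    ← Finset.mul_sum, swap24]
  rw [Finset.sum_congr rfl fun mm (_ : mm ∈ _) => Finset.sum_congr rfl fun mm' (_ : mm' ∈ _) =>
      sum_sep Finset.univ Finset.univ ((-1:ℝ)^(sgF mm A) * (-1:ℝ)^(sgF mm' A'))
        (fun t => (-1:ℝ)^(hamF mm t + hamF mm' t))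
        (fun y => (-1:ℝ)^((∑ i, dAt (y i) (A i)) + (∑ i, dAt (y i) (A' i))
            + hamF mm y + hamF mm' y))]
  rw [Finset.sum_congr rfl fun mm (_ : mm ∈ _) => Finset.sum_congr rfl fun mm' (_ : mm' ∈ _) =>
      (by rw [hamSum mm mm', ySum A A' hA hA' mm mm'] :
        ((-1:ℝ)^(sgF mm A) * (-1:ℝ)^(sgF mm' A')) *
          ((∑ t : Fin s → Fin m → Fin 2, (-1:ℝ)^(hamF mm t + hamF mm' t)) *
           (∑ y : Fin s → Fin m → Fin 2, (-1:ℝ)^((∑ i, dAt (y i) (A i))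
              + (∑ i, dAt (y i) (A' i)) + hamF mm y + hamF mm' y)))
        = ((-1:ℝ)^(sgF mm A) * (-1:ℝ)^(sgF mm' A')) *
            ((if mm = mm' then (2:ℝ)^(s*m) else 0) *
             (if (∀ i j, indF m (A i) j + indF m (A' i) j + mm i j + mm' i j = 0)
                then (2:ℝ)^(s*m) else 0)))]
  have hterm : ∀ mm mm' : Fin s → Fin m → ZMod 2,
      ((-1:ℝ)^(sgF mm A) * (-1:ℝ)^(sgF mm' A')) *
          ((if mm = mm' then (2:ℝ)^(s*m) else 0) *
           (if (∀ i j, indF m (A i) j + indF m (A' i) j + mm i j + mm' i j = 0)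
              then (2:ℝ)^(s*m) else 0))
        = if A' = A ∧ mm' = mm then (2:ℝ)^(s*m) * (2:ℝ)^(s*m) else 0 := by
    intro mm mm'
    by_cases hmm : mm = mm'
    · subst hmm
      rw [if_pos rfl]
      by_cases hAA : A' = A
      · rw [hAA]
        have hz : ∀ p v : ZMod 2, p + p + v + v = 0 := by decide
        rw [if_pos (fun i j => hz _ _), if_pos ⟨rfl, rfl⟩, ← pow_add]
        rw [Even.neg_one_pow ⟨sgF mm A, rfl⟩, one_mul]
      · have hcond : ¬(∀ i j, indF m (A i) j + indF m (A' i) j + mm i j + mm i j = 0) := by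
          intro hc
          apply hAA
          funext i
          have hred : ∀ p q v : ZMod 2, p + q + v + v = p + q := by decide
          have h2 : ∀ j, indF m (A i) j + indF m (A' i) j = 0 := fun j => by
            rw [← hred (indF m (A i) j) (indF m (A' i) j) (mm i j)]
            exact hc i j
          exact (ind_inj (A i) (A' i) (hA i) (hA' i) h2).symm
        rw [if_neg hcond, mul_zero, mul_zero, if_neg (fun h => hAA h.1)]
    · rw [if_neg hmm, zero_mul, mul_zero, if_neg (fun h => hmm h.2.symm)]
  rw [Finset.sum_congr rfl fun mm (_ : mm ∈ _) => Finset.sum_congr rfl fun mm' (_ : mm' ∈ _) =>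
    hterm mm mm']
  by_cases hAA : A' = A
  · rw [hAA, if_pos rfl]
    rw [Finset.sum_congr rfl fun mm (hmm : mm ∈ (dualNet m s C).filter
          (fun mm => mm ≠ 0 ∧ ∀ i, rhoF (mm i) ≤ A i)) => (by
        rw [Finset.sum_congr rfl fun mm' (_ : mm' ∈ _) =>
            if_congr (and_iff_right rfl) rfl rfl,
          Finset.sum_ite_eq' _ mm (fun _ => (2:ℝ)^(s*m) * (2:ℝ)^(s*m)), if_pos hmm] :
      (∑ mm' ∈ (dualNet m s C).filter (fun mm => mm ≠ 0 ∧ ∀ i, rhoF (mm i) ≤ A i),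
        if A = A ∧ mm' = mm then (2:ℝ)^(s*m) * (2:ℝ)^(s*m) else 0)
      = (2:ℝ)^(s*m) * (2:ℝ)^(s*m))]
    rw [Finset.sum_const, nsmul_eq_mul]
    have hsq : (-1:ℝ)^(kapF A) * (-1:ℝ)^(kapF A) = 1 := by
      rw [← pow_add]
      exact Even.neg_one_pow ⟨kapF A, rfl⟩
    have hpow1 : ((-1:ℝ)^(kapF A) * (2:ℝ)^((m:ℤ)-(s:ℤ)-(a0F A:ℤ))
        * ((-1:ℝ)^(kapF A) * (2:ℝ)^((m:ℤ)-(s:ℤ)-(a0F A:ℤ))))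
        = (2:ℝ)^(2*((m:ℤ)-(s:ℤ)-(a0F A:ℤ))) := by
      rw [two_mul, zpow_add₀ (by norm_num : (2:ℝ) ≠ 0)]
      calc (-1:ℝ)^(kapF A) * (2:ℝ)^((m:ℤ)-(s:ℤ)-(a0F A:ℤ))
            * ((-1:ℝ)^(kapF A) * (2:ℝ)^((m:ℤ)-(s:ℤ)-(a0F A:ℤ)))
          = ((-1:ℝ)^(kapF A) * (-1:ℝ)^(kapF A))
            * ((2:ℝ)^((m:ℤ)-(s:ℤ)-(a0F A:ℤ)) * (2:ℝ)^((m:ℤ)-(s:ℤ)-(a0F A:ℤ))) := by ring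
        _ = (2:ℝ)^((m:ℤ)-(s:ℤ)-(a0F A:ℤ)) * (2:ℝ)^((m:ℤ)-(s:ℤ)-(a0F A:ℤ)) := by
            rw [hsq, one_mul]
    have hpow2 : (2:ℝ)^(-(2 * (s:ℤ) * (m:ℤ))) * ((2:ℝ)^(s*m) * (2:ℝ)^(s*m)) = 1 := by
      rw [← pow_add, ← zpow_natCast (2:ℝ) (s*m + s*m),
        ← zpow_add₀ (by norm_num : (2:ℝ) ≠ 0)]
      have he : -(2 * (s:ℤ) * (m:ℤ)) + ((s*m + s*m : ℕ) : ℤ) = 0 := by push_cast; ring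
      rw [he, zpow_zero]
    rw [hpow1]
    calc (2:ℝ)^(-(2 * (s:ℤ) * (m:ℤ))) * ((2:ℝ)^(2*((m:ℤ)-(s:ℤ)-(a0F A:ℤ)))
          * ((((dualNet m s C).filter fun mm => mm ≠ 0 ∧ ∀ i, rhoF (mm i) ≤ A i).card : ℝ)
            * ((2:ℝ)^(s*m) * (2:ℝ)^(s*m))))
        = ((2:ℝ)^(-(2 * (s:ℤ) * (m:ℤ))) * ((2:ℝ)^(s*m) * (2:ℝ)^(s*m)))
          * ((2:ℝ)^(2*((m:ℤ)-(s:ℤ)-(a0F A:ℤ)))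
            * (((dualNet m s C).filter fun mm => mm ≠ 0 ∧ ∀ i, rhoF (mm i) ≤ A i).card : ℝ)) := by
          ring
      _ = (2:ℝ)^(2*((m:ℤ)-(s:ℤ)-(a0F A:ℤ)))
            * (((dualNet m s C).filter fun mm => mm ≠ 0 ∧ ∀ i, rhoF (mm i) ≤ A i).card : ℝ) := by
          rw [hpow2, one_mul]
  · rw [if_neg hAA]
    have hz : (∑ mm ∈ (dualNet m s C).filter (fun mm => mm ≠ 0 ∧ ∀ i, rhoF (mm i) ≤ A i),
        ∑ mm' ∈ (dualNet m s C).filter (fun mm => mm ≠ 0 ∧ ∀ i, rhoF (mm i) ≤ A' i),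
          if A' = A ∧ mm' = mm then (2:ℝ)^(s*m) * (2:ℝ)^(s*m) else 0) = 0 :=
      Finset.sum_eq_zero fun mm _ => Finset.sum_eq_zero fun mm' _ =>
        if_neg (fun h => hAA h.1)
    rw [hz, mul_zero, mul_zero]

lemma main_bound (m s tm : ℕ) (C : Fin s → Matrix (Fin m) (Fin m) (ZMod 2))
    (hnet : IsNet tm m s (fun n : Fin (2^m) => netPoint m s C (n:ℕ))) :
    Em m s (fun t y => Rtail m s C t y ^ 2)
      ≤ (2:ℝ)^((tm:ℝ) + 1 - V0 m) * ((m:ℝ)+1)^s := by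
  have hV0 : 0 ≤ V0 m := by
    unfold V0
    rcases Nat.eq_zero_or_pos m with h0 | h1
    · subst h0; simp
    · have h2 : (1:ℝ) ≤ (m:ℝ) := by exact_mod_cast h1
      have := Real.logb_nonneg one_lt_two h2
      linarith
  have hmem : ∀ A ∈ IndexTail m s, (∀ i, A i ≤ m) ∧ ((m:ℝ) + V0 m ≤ (a0F A : ℝ)) := by
    intro A hA
    unfold IndexTail at hA
    rw [Finset.mem_filter] at hA
    refine ⟨fun i => ?_, hA.2⟩
    have := (Fintype.mem_piFinset.mp hA.1) i
    rw [Finset.mem_range] at this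
    omega
  have hKnn : (0:ℝ) ≤ (2:ℝ)^((tm:ℝ)+1-V0 m) := le_of_lt (Real.rpow_pos_of_pos two_pos _)
  have hsq : (fun t y => Rtail m s C t y ^ 2)
      = fun t y => ∑ A ∈ IndexTail m s, ∑ A' ∈ IndexTail m s,
          PsiF m s C A t y * PsiF m s C A' t y := by
    funext t y
    rw [sq]
    unfold Rtail
    rw [Finset.sum_mul_sum]
  have hEm : Em m s (fun t y => Rtail m s C t y ^ 2)
      = ∑ A ∈ IndexTail m s, ∑ A' ∈ IndexTail m s,
          Em m s (fun t y => PsiF m s C A t y * PsiF m s C A' t y) := by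
    rw [hsq, Em_sum]
    exact Finset.sum_congr rfl fun A _ => Em_sum _ _
  have hinner : ∀ A ∈ IndexTail m s,
      (∑ A' ∈ IndexTail m s, Em m s (fun t y => PsiF m s C A t y * PsiF m s C A' t y))
      = (2:ℝ)^(2*((m:ℤ)-(s:ℤ)-(a0F A:ℤ)))
          * (((dualNet m s C).filter fun mm => mm ≠ 0 ∧ ∀ i, rhoF (mm i) ≤ A i).card : ℝ) := by
    intro A hA
    rw [Finset.sum_congr rfl fun A' hA' => psi_Em C A A' (hmem A hA).1 (hmem A' hA').1,
      Finset.sum_ite_eq' (IndexTail m s) A _, if_pos hA]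
  have hAbound : ∀ A ∈ IndexTail m s,
      (2:ℝ)^(2*((m:ℤ)-(s:ℤ)-(a0F A:ℤ)))
          * (((dualNet m s C).filter fun mm => mm ≠ 0 ∧ ∀ i, rhoF (mm i) ≤ A i).card : ℝ)
        ≤ (2:ℝ)^((tm:ℝ)+1-V0 m) := by
    intro A hA
    have hge : m ≤ tm + a0F A := by
      have h2 := (hmem A hA).2
      have h3 : (m:ℝ) ≤ (a0F A : ℝ) := by linarith
      have h4 : m ≤ a0F A := by exact_mod_cast h3
      omega
    have hcard1 : (((dualNet m s C).filter fun mm => mm ≠ 0 ∧ ∀ i, rhoF (mm i) ≤ A i).card : ℝ)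
        ≤ (((dualNet m s C).filter fun mm => ∀ i, rhoF (mm i) ≤ A i).card : ℝ) := by
      have hsub : ((dualNet m s C).filter fun mm => mm ≠ 0 ∧ ∀ i, rhoF (mm i) ≤ A i)
          ⊆ ((dualNet m s C).filter fun mm => ∀ i, rhoF (mm i) ≤ A i) := by
        intro mm hmm
        rw [Finset.mem_filter] at hmm ⊢
        exact ⟨hmm.1, hmm.2.2⟩
      exact_mod_cast Finset.card_le_card hsub
    have h1 := hcard1.trans (count_bound C hnet A (hmem A hA).1 hge)
    have hz : (2:ℝ)^(2*((m:ℤ)-(s:ℤ)-(a0F A:ℤ)))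
          * (((dualNet m s C).filter fun mm => mm ≠ 0 ∧ ∀ i, rhoF (mm i) ≤ A i).card : ℝ)
        ≤ (2:ℝ)^(2*((m:ℤ)-(s:ℤ)-(a0F A:ℤ))) * (2:ℝ)^((tm:ℤ)+(a0F A:ℤ)-(m:ℤ)) :=
      mul_le_mul_of_nonneg_left h1 (by positivity)
    refine hz.trans ?_
    rw [← zpow_add₀ (by norm_num : (2:ℝ) ≠ 0),
      ← Real.rpow_intCast 2 (2*((m:ℤ)-(s:ℤ)-(a0F A:ℤ)) + ((tm:ℤ)+(a0F A:ℤ)-(m:ℤ)))]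
    apply Real.rpow_le_rpow_of_exponent_le one_le_two
    push_cast
    have h2 := (hmem A hA).2
    have hs0 : (0:ℝ) ≤ (s:ℝ) := Nat.cast_nonneg s
    linarith
  have hcardR : ((IndexTail m s).card : ℝ) ≤ ((m:ℝ)+1)^s := by
    have h1 : (IndexTail m s).card
        ≤ (Fintype.piFinset fun _ : Fin s => Finset.range (m+1)).card :=
      Finset.card_filter_le _ _
    have h2 : (Fintype.piFinset fun _ : Fin s => Finset.range (m+1)).card = (m+1)^s := by
      rw [Fintype.card_piFinset]
      simp [Finset.card_range]
    calc ((IndexTail m s).card : ℝ) ≤ (((m+1)^s : ℕ) : ℝ) := by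
          exact_mod_cast h1.trans (le_of_eq h2)
      _ = ((m:ℝ)+1)^s := by push_cast; ring
  calc Em m s (fun t y => Rtail m s C t y ^ 2)
      = ∑ A ∈ IndexTail m s, (2:ℝ)^(2*((m:ℤ)-(s:ℤ)-(a0F A:ℤ)))
          * (((dualNet m s C).filter fun mm => mm ≠ 0 ∧ ∀ i, rhoF (mm i) ≤ A i).card : ℝ) := by
        rw [hEm]
        exact Finset.sum_congr rfl hinner
    _ ≤ ∑ _A ∈ IndexTail m s, (2:ℝ)^((tm:ℝ)+1-V0 m) := Finset.sum_le_sum hAbound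
    _ = ((IndexTail m s).card : ℝ) * (2:ℝ)^((tm:ℝ)+1-V0 m) := by
        rw [Finset.sum_const, nsmul_eq_mul]
    _ ≤ ((m:ℝ)+1)^s * (2:ℝ)^((tm:ℝ)+1-V0 m) := mul_le_mul_of_nonneg_right hcardR hKnn
    _ = (2:ℝ)^((tm:ℝ)+1-V0 m) * ((m:ℝ)+1)^s := mul_comm _ _
/-- the tail of the Walsh decomposition satisfies
`E^{(m)}_{Y,T}(R²) ≤ 2^{t_m+1-V₀}(m+1)^s`; in particular
`E^{(m)}_{Y,T}(R²) = O(m^{s-9.9})` when `t_m ≤ (1/10) log₂ m`. -/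
theorem statement8 (s : ℕ) (hs : 2 ≤ s) :
    (∀ (m tm : ℕ) (C : Fin s → Matrix (Fin m) (Fin m) (ZMod 2)),
        IsNet tm m s (fun n : Fin (2 ^ m) => netPoint m s C (n : ℕ)) →
        Em m s (fun t y => Rtail m s C t y ^ 2) ≤
          (2 : ℝ) ^ ((tm : ℝ) + 1 - V0 m) * ((m : ℝ) + 1) ^ s) ∧
    ∃ c : ℝ, 0 < c ∧ ∀ (m tm : ℕ), 1 ≤ m →
      ∀ C : Fin s → Matrix (Fin m) (Fin m) (ZMod 2),
        IsNet tm m s (fun n : Fin (2 ^ m) => netPoint m s C (n : ℕ)) →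
        (tm : ℝ) ≤ Real.logb 2 m / 10 →
        Em m s (fun t y => Rtail m s C t y ^ 2) ≤ c * (m : ℝ) ^ ((s : ℝ) - 9.9) := by
  constructor
  · intro m tm C hnet
    exact main_bound m s tm C hnet
  · refine ⟨(2:ℝ)^(s+1), by positivity, fun m tm hm C hnet htm => ?_⟩
    have h1 := main_bound m s tm C hnet
    refine h1.trans ?_
    have hm1 : (1:ℝ) ≤ (m:ℝ) := by exact_mod_cast hm
    have hmpos : (0:ℝ) < (m:ℝ) := by linarith
    have e1 : (2:ℝ)^((tm:ℝ)+1-V0 m) = (2:ℝ)^(tm:ℝ) * 2 * (2:ℝ)^(-V0 m) := by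
      rw [show (tm:ℝ)+1-V0 m = (tm:ℝ) + 1 + (-(V0 m)) by ring,
        Real.rpow_add two_pos, Real.rpow_add two_pos, Real.rpow_one]
    have e2 : (2:ℝ)^(tm:ℝ) ≤ (m:ℝ)^(0.1:ℝ) := by
      calc (2:ℝ)^(tm:ℝ) ≤ (2:ℝ)^(Real.logb 2 m / 10) :=
            Real.rpow_le_rpow_of_exponent_le one_le_two htm
        _ = ((2:ℝ)^(Real.logb 2 m))^((1:ℝ)/10) := by
            rw [div_eq_mul_one_div, Real.rpow_mul (by norm_num : (0:ℝ) ≤ 2)]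
        _ = (m:ℝ)^((1:ℝ)/10) := by
            rw [Real.rpow_logb two_pos (by norm_num) hmpos]
        _ = (m:ℝ)^(0.1:ℝ) := by norm_num
    have e3 : (2:ℝ)^(-V0 m) = (m:ℝ)^(-10:ℝ) := by
      unfold V0
      rw [show -(10 * Real.logb 2 m) = Real.logb 2 m * (-10) by ring,
        Real.rpow_mul (by norm_num : (0:ℝ) ≤ 2),
        Real.rpow_logb two_pos (by norm_num) hmpos]
    have e4 : ((m:ℝ)+1)^s ≤ (2:ℝ)^s * (m:ℝ)^((s:ℝ)) := by
      have h5 : ((m:ℝ)+1)^s ≤ (2*(m:ℝ))^s := pow_le_pow_left₀ (by positivity) (by linarith) s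
      rw [mul_pow] at h5
      rw [Real.rpow_natCast]
      exact h5
    have e5 : (m:ℝ)^(0.1:ℝ) * (m:ℝ)^(-10:ℝ) * (m:ℝ)^((s:ℝ)) = (m:ℝ)^((s:ℝ)-9.9) := by
      rw [← Real.rpow_add hmpos, ← Real.rpow_add hmpos]
      norm_num
      ring_nf
    calc (2:ℝ)^((tm:ℝ)+1-V0 m) * ((m:ℝ)+1)^s
        ≤ ((m:ℝ)^(0.1:ℝ) * 2 * (m:ℝ)^(-10:ℝ)) * ((2:ℝ)^s * (m:ℝ)^((s:ℝ))) := by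
          rw [e1, e3]
          have hb1 : (2:ℝ)^(tm:ℝ) * 2 * (m:ℝ)^(-10:ℝ)
              ≤ (m:ℝ)^(0.1:ℝ) * 2 * (m:ℝ)^(-10:ℝ) := by gcongr
          exact mul_le_mul hb1 e4 (by positivity) (by positivity)
      _ = (2:ℝ)^(s+1) * (m:ℝ)^((s:ℝ)-9.9) := by
          rw [← e5, pow_succ]
          ring
end
end

section
/- Let P_m be a dyadic digital (t_m, m, s)-net in base 2. Then (𝔇_k, F_k)_{1 ≤ k ≤ m} is a martingale difference sequence: each 𝔇_k(T,Y) is measurable with respect to F_k (it depends only on the first k dyadic digits of each coordinate of T and Y), and E^{(m)}_{Y,T}(𝔇_k | F_{k−1}) = 0 for every 1 ≤ k ≤ m. -/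
open MeasureTheory Filter

noncomputable section

attribute [local instance] Classical.propDecidable

section Aux

lemma zmod2_eq_one {x : ZMod 2} (h : x ≠ 0) : x = 1 := by revert x h; decide

lemma fin2_flip_pow (v : Fin 2) (w : ℕ) :
    (-1:ℝ) ^ (((v + 1 : Fin 2)).val + w) = -(-1:ℝ) ^ ((v.val : ℕ) + w) := by
  fin_cases v <;> simp [pow_add, pow_succ]

lemma fin2_flip_pow' (v : Fin 2) :
    (-1:ℝ) ^ ((v + 1 : Fin 2)).val = -(-1:ℝ) ^ (v.val : ℕ) := by
  fin_cases v <;> simp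

lemma prod_flip_single {ι : Type*} [Fintype ι] [DecidableEq ι] (i0 : ι) (f g : ι → ℝ)
    (h0 : f i0 = - g i0) (h : ∀ i, i ≠ i0 → f i = g i) : ∏ i, f i = - ∏ i, g i := by
  have key : ∀ i, f i = (if i = i0 then (-1:ℝ) else 1) * g i := by
    intro i; by_cases hi : i = i0
    · subst hi; simp [h0]
    · simp [hi, h _ hi]
  rw [Finset.prod_congr rfl (fun i _ => key i), Finset.prod_mul_distrib,
    Finset.prod_ite_eq' Finset.univ i0 (fun _ => (-1:ℝ))]
  simp

lemma sum_flip_zero {β : Type*} [Fintype β] (σ : Equiv.Perm β) (g : β → ℝ)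
    (h : ∀ x, g (σ x) = - g x) : ∑ x, g x = 0 := by
  have h1 := Equiv.sum_comp σ g
  have h2 : ∑ x, g (σ x) = -∑ x, g x := by simp only [h]; exact Finset.sum_neg_distrib g
  linarith

/-- Flip the digit at position `(i0, j0)`. -/
def flipAt {s m : ℕ} (i0 : Fin s) (j0 : Fin m) (t : Fin s → Fin m → Fin 2) :
    Fin s → Fin m → Fin 2 :=
  fun i j => if i = i0 ∧ j = j0 then t i j + 1 else t i j

lemma flipAt_invol {s m : ℕ} (i0 : Fin s) (j0 : Fin m) :
    Function.Involutive (flipAt (s := s) (m := m) i0 j0) := by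
  intro t; funext i j
  by_cases h : i = i0 ∧ j = j0
  · simp only [flipAt, if_pos h]
    exact (by decide : ∀ v : Fin 2, v + 1 + 1 = v) _
  · simp only [flipAt, if_neg h]

lemma flipAt_apply_ne {s m : ℕ} (i0 : Fin s) (j0 : Fin m) (t : Fin s → Fin m → Fin 2)
    (i : Fin s) (j : Fin m) (h : ¬(i = i0 ∧ j = j0)) : flipAt i0 j0 t i j = t i j := by
  simp [flipAt, h]

lemma flipAt_apply_eq {s m : ℕ} (i0 : Fin s) (j0 : Fin m) (t : Fin s → Fin m → Fin 2) :
    flipAt i0 j0 t i0 j0 = t i0 j0 + 1 := by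
  simp [flipAt]

lemma merge_flip {s m : ℕ} (K : ℕ) (i0 : Fin s) (j0 : Fin m) (hj0 : ¬ ((j0 : ℕ) < K))
    (t t' : Fin s → Fin m → Fin 2) :
    mergeDig K t (flipAt i0 j0 t') = flipAt i0 j0 (mergeDig K t t') := by
  funext i j
  by_cases h : i = i0 ∧ j = j0
  · obtain ⟨rfl, rfl⟩ := h
    simp [mergeDig, flipAt, hj0]
  · simp only [mergeDig, flipAt, if_neg h]

end Aux


section Aux2

/-- The exponent appearing in `LamF`. -/
def ExF {s m : ℕ} (mm : Fin s → Fin m → ZMod 2) (A : Fin s → ℕ)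
    (t y : Fin s → Fin m → Fin 2) : ℕ :=
  ∑ i, ((∑ j, (mm i j).val * ((t i j : ℕ) + (y i j : ℕ))) + mAt (mm i) (A i))

lemma LamF_eq (m s : ℕ) (C : Fin s → Matrix (Fin m) (Fin m) (ZMod 2)) (A : Fin s → ℕ)
    (t y : Fin s → Fin m → Fin 2) :
    LamF m s C A t y =
      ∑ mm ∈ (dualNet m s C).filter fun mm => mm ≠ 0 ∧ ∀ i, rhoF (mm i) ≤ A i,
        (-1 : ℝ) ^ (ExF mm A t y) := rfl

lemma radem_flip {s m : ℕ} (A : Fin s → ℕ) (i0 : Fin s) (j0 : Fin m)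
    (hA : 1 ≤ A i0 ∧ A i0 ≤ m) (hj : (j0 : ℕ) = A i0 - 1)
    (y : Fin s → Fin m → Fin 2) :
    rademF A (flipAt i0 j0 y) = - rademF A y := by
  unfold rademF
  apply prod_flip_single i0
  · unfold dAt
    rw [dif_pos hA, dif_pos hA]
    have hji : (⟨A i0 - 1, by omega⟩ : Fin m) = j0 := Fin.ext (by simp [hj])
    rw [hji, flipAt_apply_eq]
    exact fin2_flip_pow' _
  · intro i hi
    have hz : flipAt i0 j0 y i = y i :=
      funext fun j => flipAt_apply_ne _ _ _ _ _ (by tauto)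
    rw [hz]

lemma exF_flip_y {s m : ℕ} (mm : Fin s → Fin m → ZMod 2) (A : Fin s → ℕ)
    (i0 : Fin s) (j0 : Fin m) (h0 : mm i0 j0 = 0) (t y : Fin s → Fin m → Fin 2) :
    ExF mm A t (flipAt i0 j0 y) = ExF mm A t y := by
  unfold ExF
  refine Finset.sum_congr rfl fun i _ => ?_
  congr 1
  refine Finset.sum_congr rfl fun j _ => ?_
  by_cases h : i = i0 ∧ j = j0
  · obtain ⟨rfl, rfl⟩ := h
    rw [h0]
    simp
  · rw [flipAt_apply_ne _ _ _ _ _ h]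

lemma exF_flip_t {s m : ℕ} (mm : Fin s → Fin m → ZMod 2) (A : Fin s → ℕ)
    (i0 : Fin s) (j0 : Fin m) (h0 : mm i0 j0 ≠ 0) (t y : Fin s → Fin m → Fin 2) :
    (-1 : ℝ) ^ (ExF mm A (flipAt i0 j0 t) y) = -(-1 : ℝ) ^ (ExF mm A t y) := by
  unfold ExF
  rw [← Finset.prod_pow_eq_pow_sum, ← Finset.prod_pow_eq_pow_sum]
  apply prod_flip_single i0
  · rw [pow_add, pow_add, ← Finset.prod_pow_eq_pow_sum, ← Finset.prod_pow_eq_pow_sum]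
    have key : (∏ j, (-1:ℝ) ^ ((mm i0 j).val * ((flipAt i0 j0 t i0 j : ℕ) + (y i0 j : ℕ))))
        = - ∏ j, (-1:ℝ) ^ ((mm i0 j).val * ((t i0 j : ℕ) + (y i0 j : ℕ))) := by
      apply prod_flip_single j0
      · rw [flipAt_apply_eq]
        have hv : (mm i0 j0).val = 1 := by rw [zmod2_eq_one h0]; rfl
        rw [hv, one_mul, one_mul]
        exact fin2_flip_pow _ _
      · intro j hj
        rw [flipAt_apply_ne _ _ _ _ _ (by tauto)]
    rw [key]
    ring
  · intro i hi
    have hz : flipAt i0 j0 t i = t i :=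
      funext fun j => flipAt_apply_ne _ _ _ _ _ (by tauto)
    rw [hz]

lemma triple_swap {α β γ : Type*} [Fintype α] [Fintype β] (S : Finset γ)
    (F : γ → α → β → ℝ) :
    (∑ a : α, ∑ b : β, ∑ c ∈ S, F c a b) = ∑ c ∈ S, ∑ a : α, ∑ b : β, F c a b := by
  calc (∑ a : α, ∑ b : β, ∑ c ∈ S, F c a b)
      = ∑ a : α, ∑ c ∈ S, ∑ b : β, F c a b :=
        Finset.sum_congr rfl fun _ _ => Finset.sum_comm
    _ = _ := Finset.sum_comm

end Aux2

/-- `(𝔇_k, F_k)_{1 ≤ k ≤ m}` is a martingale difference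
sequence: `𝔇_k` depends only on the first `k` dyadic digits of each coordinate
of `T` and `Y` (i.e. is `F_k`-measurable), and `E^{(m)}_{Y,T}(𝔇_k | F_{k-1}) = 0`. -/
theorem statement11 (s m tm : ℕ) (hs : 2 ≤ s)
    (C : Fin s → Matrix (Fin m) (Fin m) (ZMod 2))
    (hnet : IsNet tm m s fun n : Fin (2 ^ m) => netPoint m s C (n : ℕ))
    (k : ℕ) (hk : k ∈ Finset.Icc 1 m) :
    (∀ t y t' y' : Fin s → Fin m → Fin 2,
        (∀ (i : Fin s) (j : Fin m), (j : ℕ) < k → t i j = t' i j) →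
        (∀ (i : Fin s) (j : Fin m), (j : ℕ) < k → y i j = y' i j) →
        DDk m s tm C k t y = DDk m s tm C k t' y') ∧
    ∀ t y : Fin s → Fin m → Fin 2,
      EmCond m s (k - 1) (DDk m s tm C k) t y = 0 := by
  obtain ⟨hk1, hkm⟩ := Finset.mem_Icc.mp hk
  constructor
  · -- measurability part
    intro t y t' y' ht hy
    unfold DDk
    refine Finset.sum_congr rfl fun A hA => ?_
    have hAle : ∀ i, A i ≤ k := by
      intro i
      have h2 := (Finset.mem_filter.mp hA).2.1
      rw [← h2]
      exact Finset.le_sup (Finset.mem_univ i)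
    have hrad : rademF A y = rademF A y' := by
      unfold rademF
      refine Finset.prod_congr rfl fun i _ => ?_
      unfold dAt
      by_cases h : 1 ≤ A i ∧ A i ≤ m
      · have hik := hAle i
        rw [dif_pos h, dif_pos h, hy i ⟨A i - 1, by omega⟩ (show A i - 1 < k by omega)]
      · rw [dif_neg h, dif_neg h]
    have hlam : LamF m s C A t y = LamF m s C A t' y' := by
      unfold LamF
      refine Finset.sum_congr rfl fun mm hmm => ?_
      have hrho : ∀ i, rhoF (mm i) ≤ A i := (Finset.mem_filter.mp hmm).2.2
      congr 1
      refine Finset.sum_congr rfl fun i _ => ?_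
      congr 1
      refine Finset.sum_congr rfl fun j _ => ?_
      by_cases hj : (j : ℕ) < k
      · rw [ht i j hj, hy i j hj]
      · have hz : mm i j = 0 := by
          by_contra hne
          have : (j : ℕ) + 1 ≤ rhoF (mm i) := by
            refine Finset.le_sup (f := fun j : Fin m => (j : ℕ) + 1) ?_
            simp [hne]
          have := hrho i
          have := hAle i
          omega
        rw [hz]
        simp
    unfold PsiF
    rw [hrad, hlam]
  · -- conditional expectation part
    intro t y
    unfold EmCond
    rw [mul_eq_zero]
    right
    haveI : Nonempty (Fin s) := ⟨⟨0, by omega⟩⟩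
    simp only [DDk]
    rw [triple_swap]
    refine Finset.sum_eq_zero fun A hA => ?_
    obtain ⟨i0, -, hi0⟩ := Finset.exists_mem_eq_sup Finset.univ Finset.univ_nonempty A
    have hsupA : Finset.univ.sup A = k := (Finset.mem_filter.mp hA).2.1
    have hA0 : A i0 = k := by rw [← hi0, hsupA]
    set j0 : Fin m := ⟨k - 1, by omega⟩ with hj0def
    have hmerge : ¬ ((j0 : ℕ) < k - 1) := by show ¬ (k - 1 < k - 1); omega
    simp only [PsiF, LamF_eq, Finset.mul_sum]
    rw [triple_swap]
    refine Finset.sum_eq_zero fun mm hmm => ?_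
    by_cases h0 : mm i0 j0 = 0
    · refine Finset.sum_eq_zero fun t' _ => ?_
      refine sum_flip_zero (Function.Involutive.toPerm _ (flipAt_invol i0 j0)) _ fun y'' => ?_
      simp only [Function.Involutive.coe_toPerm]
      rw [merge_flip (k-1) i0 j0 hmerge y y'', exF_flip_y mm A i0 j0 h0,
        radem_flip A i0 j0 ⟨by omega, by omega⟩ (by simp [hj0def, hA0])]
      ring
    · rw [Finset.sum_comm]
      refine Finset.sum_eq_zero fun y'' _ => ?_
      refine sum_flip_zero (Function.Involutive.toPerm _ (flipAt_invol i0 j0)) _ fun t'' => ?_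
      simp only [Function.Involutive.coe_toPerm]
      rw [merge_flip (k-1) i0 j0 hmerge t t'', exF_flip_t mm A i0 j0 h0]
      ring
end
end
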